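/- arXiv:1901.08463 — 14 statements merged into one kernel-verified Lean document; each statement's English description precedes it below -/
import Mathlib

section
/- For any instance with two groups of agents of sizes 3 and 2, where all five agents have binary valuations over a finite set G of goods, there exists an allocation (B₁, B₂) of G to the two groups that is EF1 for every agent. -/
open Finset

variable {γ : Type*} [DecidableEq γ]

/-- An allocation is EF1 for an agent with valuation `u` whose group receives `mine`,
the other group receiving `other`. -/
def EF1 (u : Finset γ → ℝ) (mine other : Finset γ) : Prop :=
  ∃ B ⊆ other, B.card ≤ 1 ∧ u (other \ B) ≤ u mine

/-- A valuation is additive if the value of a set is the sum of values of its singletons. -/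
def AdditiveVal (u : Finset γ → ℝ) : Prop :=
  ∀ S : Finset γ, u S = ∑ g ∈ S, u {g}

/-- A valuation is binary if it is additive and each good has value 0 or 1. -/
def Binary (u : Finset γ → ℝ) : Prop :=
  AdditiveVal u ∧ ∀ g : γ, u {g} = 0 ∨ u {g} = 1

/-! For binary valuations an allocation is EF1 as soon as every agent values the other bundle at
most one more than their own, so it suffices to split the goods so that these five inequalities
hold. Some moves never hurt anyone: a good valued by nobody in one group goes to the other group,
and if `t` is worth at least as much as `u` to each agent of group one and at most as much to each
agent of group two, then `t` goes to group one and `u` to group two. Once no move applies, the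
goods have pairwise distinct and pairwise incomparable types, a type being the set of agents who
value the good, and each is valued by someone in each group. Only 21 types qualify, and a search
through all antichains of them, checked by the kernel, finds a fair split of each. -/

theorem Binary.ef1_of_sum_le_sum_add_one {w : Finset γ → ℝ} (hw : Binary w)
    {mine other : Finset γ} (h : ∑ g ∈ other, w {g} ≤ ∑ g ∈ mine, w {g} + 1) :
    EF1 w mine other := by
  rw [← hw.1, ← hw.1] at h
  by_cases hle : w other ≤ w mine
  · exact ⟨∅, empty_subset _, by simp, by simpa using hle⟩
  obtain ⟨g, hg, hg1⟩ : ∃ g ∈ other, w {g} = 1 := by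
    by_contra! h0
    have hother : w other = 0 := by
      rw [hw.1]
      exact sum_eq_zero fun g hg => (hw.2 g).resolve_right (h0 g hg)
    have hmine : 0 ≤ w mine := by
      rw [hw.1]
      exact sum_nonneg fun g _ => by rcases hw.2 g with h | h <;> simp [h]
    linarith
  have hsplit : w (other \ {g}) + w {g} = w other := by
    rw [hw.1, hw.1 other, ← sum_singleton (fun x => w {x}) g]
    exact sum_sdiff (singleton_subset_iff.2 hg)
  exact ⟨{g}, singleton_subset_iff.2 hg, by simp, by linarith⟩

section FairSplit

variable {α β ι κ : Type*} (p : ι → α → ℝ) (q : κ → α → ℝ)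

def FairSplit (A B : Finset α) : Prop :=
  (∀ i, ∑ g ∈ B, p i g ≤ ∑ g ∈ A, p i g + 1) ∧ ∀ k, ∑ g ∈ A, q k g ≤ ∑ g ∈ B, q k g + 1

def HasFairSplit [DecidableEq α] (S : Finset α) : Prop :=
  ∃ A B, Disjoint A B ∧ A ∪ B = S ∧ FairSplit p q A B

/-- Giving `t` to group one and `u` to group two, rather than the other way round, is good for
every agent. -/
def Dominates (t u : α) : Prop :=
  (∀ i, p i u ≤ p i t) ∧ ∀ k, q k t ≤ q k u

def Reduced (S : Finset α) : Prop :=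
  ∀ t ∈ S, (∃ i, 0 < p i t) ∧ (∃ k, 0 < q k t) ∧ ∀ u ∈ S, Dominates p q t u → t = u

variable {p q} {S : Finset α}

theorem Reduced.injOn {c : α → β} {p : ι → β → ℝ} {q : κ → β → ℝ}
    (h : Reduced (fun i g => p i (c g)) (fun k g => q k (c g)) S) : Set.InjOn c S :=
  fun t ht u hu hc => (h t ht).2.2 u hu ⟨fun i => by simp [hc], fun k => by simp [hc]⟩

theorem Reduced.image [DecidableEq β] {c : α → β} {p : ι → β → ℝ} {q : κ → β → ℝ}
    (h : Reduced (fun i g => p i (c g)) (fun k g => q k (c g)) S) : Reduced p q (S.image c) := by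
  simp only [Reduced, forall_mem_image]
  exact fun t ht => ⟨(h t ht).1, (h t ht).2.1, fun u hu hd => congrArg c ((h t ht).2.2 u hu hd)⟩

theorem sum_filter_mem_comp [DecidableEq β] {c : α → β} (hc : Set.InjOn c S) {P : Finset β}
    (hP : P ⊆ S.image c) (f : β → ℝ) : ∑ g ∈ S.filter (c · ∈ P), f (c g) = ∑ t ∈ P, f t := by
  have himage : (S.filter (c · ∈ P)).image c = P := by
    rw [← filter_image (p := (· ∈ P)), filter_mem_eq_inter, inter_eq_right.2 hP]
  rw [← sum_image (hc.mono (coe_subset.2 (filter_subset _ _))), himage]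

variable [DecidableEq α] {A B : Finset α} {t u : α}

theorem FairSplit.insert_left (h : FairSplit p q A B) (ht : t ∉ A) (hp : ∀ i, 0 ≤ p i t)
    (hq : ∀ k, q k t ≤ 0) : FairSplit p q (insert t A) B := by
  refine ⟨fun i => ?_, fun k => ?_⟩ <;> rw [sum_insert ht]
  · linarith [h.1 i, hp i]
  · linarith [h.2 k, hq k]

theorem FairSplit.insert_right (h : FairSplit p q A B) (ht : t ∉ B) (hp : ∀ i, p i t ≤ 0)
    (hq : ∀ k, 0 ≤ q k t) : FairSplit p q A (insert t B) := by
  refine ⟨fun i => ?_, fun k => ?_⟩ <;> rw [sum_insert ht]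
  · linarith [h.1 i, hp i]
  · linarith [h.2 k, hq k]

theorem FairSplit.insert_insert (h : FairSplit p q A B) (ht : t ∉ A) (hu : u ∉ B)
    (hd : Dominates p q t u) : FairSplit p q (insert t A) (insert u B) := by
  refine ⟨fun i => ?_, fun k => ?_⟩ <;> rw [sum_insert ht, sum_insert hu]
  · linarith [h.1 i, hd.1 i]
  · linarith [h.2 k, hd.2 k]

theorem HasFairSplit.insert_left (h : HasFairSplit p q S) (ht : t ∉ S) (hp : ∀ i, 0 ≤ p i t)
    (hq : ∀ k, q k t ≤ 0) : HasFairSplit p q (insert t S) := by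
  obtain ⟨A, B, hAB, rfl, hf⟩ := h
  rw [mem_union, not_or] at ht
  exact ⟨insert t A, B, disjoint_insert_left.2 ⟨ht.2, hAB⟩, insert_union t A B,
    hf.insert_left ht.1 hp hq⟩

theorem HasFairSplit.insert_right (h : HasFairSplit p q S) (ht : t ∉ S) (hp : ∀ i, p i t ≤ 0)
    (hq : ∀ k, 0 ≤ q k t) : HasFairSplit p q (insert t S) := by
  obtain ⟨A, B, hAB, rfl, hf⟩ := h
  rw [mem_union, not_or] at ht
  exact ⟨A, insert t B, disjoint_insert_right.2 ⟨ht.1, hAB⟩, union_insert t A B,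
    hf.insert_right ht.2 hp hq⟩

theorem HasFairSplit.insert_insert (h : HasFairSplit p q S) (ht : t ∉ S) (hu : u ∉ S)
    (htu : t ≠ u) (hd : Dominates p q t u) : HasFairSplit p q (insert t (insert u S)) := by
  obtain ⟨A, B, hAB, rfl, hf⟩ := h
  rw [mem_union, not_or] at ht hu
  refine ⟨insert t A, insert u B, ?_, by rw [insert_union, union_insert],
    hf.insert_insert ht.1 hu.2 hd⟩
  simp only [disjoint_insert_left, disjoint_insert_right, mem_insert, not_or]
  exact ⟨⟨htu.symm, hu.1⟩, ht.2, hAB⟩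

theorem hasFairSplit_of_forall_reduced (hp : ∀ i g, 0 ≤ p i g) (hq : ∀ k g, 0 ≤ q k g)
    (h : ∀ S, Reduced p q S → HasFairSplit p q S) (S : Finset α) : HasFairSplit p q S := by
  refine Finset.strongInduction (fun S ih => ?_) S
  by_cases h₁ : ∃ t ∈ S, ∀ k, q k t ≤ 0
  · obtain ⟨t, ht, hqt⟩ := h₁
    rw [← insert_erase ht]
    exact (ih _ (erase_ssubset ht)).insert_left (notMem_erase t S) (hp · t) hqt
  by_cases h₂ : ∃ t ∈ S, ∀ i, p i t ≤ 0
  · obtain ⟨t, ht, hpt⟩ := h₂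
    rw [← insert_erase ht]
    exact (ih _ (erase_ssubset ht)).insert_right (notMem_erase t S) hpt (hq · t)
  by_cases h₃ : ∃ t ∈ S, ∃ u ∈ S, t ≠ u ∧ Dominates p q t u
  · obtain ⟨t, ht, u, hu, htu, hd⟩ := h₃
    have hu' : u ∈ S.erase t := mem_erase.2 ⟨htu.symm, hu⟩
    rw [← insert_erase ht, ← insert_erase hu']
    refine (ih _ ((erase_subset u _).trans_ssubset (erase_ssubset ht))).insert_insert ?_
      (notMem_erase u _) htu hd
    exact fun h => notMem_erase t S (mem_of_mem_erase h)
  push Not at h₁ h₂ h₃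
  exact h S fun t ht => ⟨h₂ t ht, h₁ t ht, fun u hu hd => by_contra (h₃ t ht u hu · hd)⟩

theorem HasFairSplit.of_image [DecidableEq β] {c : α → β} {p : ι → β → ℝ} {q : κ → β → ℝ}
    (hc : Set.InjOn c S) (h : HasFairSplit p q (S.image c)) :
    HasFairSplit (fun i g => p i (c g)) (fun k g => q k (c g)) S := by
  obtain ⟨P, M, hPM, hS, hf⟩ := h
  have hP : P ⊆ S.image c := hS ▸ subset_union_left
  have hM : M ⊆ S.image c := hS ▸ subset_union_right
  refine ⟨S.filter (c · ∈ P), S.filter (c · ∈ M), ?_, ?_, ?_⟩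
  · exact disjoint_filter.2 fun g _ hgP hgM => disjoint_left.1 hPM hgP hgM
  · rw [← filter_or, filter_true_of_mem]
    intro g hg
    simpa [← mem_union, hS] using mem_image_of_mem c hg
  · simp only [FairSplit, sum_filter_mem_comp hc hP, sum_filter_mem_comp hc hM]
    exact hf

end FairSplit

theorem eq_ite_of_eq_zero_or_eq_one {x : ℝ} (h : x = 0 ∨ x = 1) : x = if x = 1 then 1 else 0 := by
  split_ifs with h1
  exacts [h1, h.resolve_right h1]

def allPairwiseSublists {β : Type*} (r : β → β → Bool) (good : List β → Bool) :
    List β → List β → Bool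
  | [], cur => good cur
  | t :: rest, cur =>
      allPairwiseSublists r good rest cur &&
        (!cur.all (r t) || allPairwiseSublists r good rest (t :: cur))

theorem allPairwiseSublists_sound {β : Type*} {r : β → β → Bool}
    (hr : ∀ a b, r a b = true → r b a = true) {good : List β → Bool} {Q : List β → Prop}
    (hQ : ∀ {l l'}, l.Perm l' → Q l → Q l') (hgood : ∀ l, l.Pairwise (r · ·) → good l → Q l) :
    ∀ {rest cur}, allPairwiseSublists r good rest cur →
      ∀ S, S.Sublist rest → (S ++ cur).Pairwise (r · ·) → Q (S ++ cur)
  | [], cur, h, S, hS, hpw => by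
    rw [List.sublist_nil.1 hS] at hpw ⊢
    exact hgood _ hpw h
  | t :: rest, cur, h, S, hS, hpw => by
    rw [allPairwiseSublists, Bool.and_eq_true, Bool.or_eq_true, Bool.not_eq_true'] at h
    cases hS with
    | cons _ hS => exact allPairwiseSublists_sound hr hQ hgood h.1 S hS hpw
    | @cons_cons S _ _ hS =>
      have hperm : (S ++ t :: cur).Perm (t :: (S ++ cur)) := List.perm_middle
      obtain ⟨ht, -⟩ := List.pairwise_cons.1 hpw
      have hcur : cur.all (r t) = true := List.all_eq_true.2 fun u hu => ht u (by simp [hu])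
      refine hQ hperm (allPairwiseSublists_sound hr hQ hgood ?_ S hS ?_)
      · simpa [hcur] using h.2
      · exact (hperm.pairwise_iff fun h => hr _ _ h).2 hpw

namespace GoodType

/-- A type of good is a subset of the five agents, encoded by its bits: agents `0, 1, 2` form
group one and agents `3, 4` group two. -/
def likes (i t : ℕ) : ℤ := if t.testBit i then 1 else 0

def groupOne (i : Fin 3) (t : ℕ) : ℝ := likes i t

def groupTwo (k : Fin 2) (t : ℕ) : ℝ := likes (3 + k) t

def isDominating (t u : ℕ) : Bool :=
  (List.range 3).all (fun i => likes i u ≤ likes i t) &&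
    (List.range 2).all fun k => likes (3 + k) t ≤ likes (3 + k) u

def isIncomparable (t u : ℕ) : Bool := !isDominating t u && !isDominating u t

def mixedTypes : List ℕ :=
  (List.range (2 ^ 5)).filter fun t =>
    (List.range 3).any (fun i => 0 < likes i t) && (List.range 2).any fun k => 0 < likes (3 + k) t

def total (i : ℕ) (l : List ℕ) : ℤ := (l.map (likes i)).sum

def isFair (P M : List ℕ) : Bool :=
  (List.range 3).all (fun i => total i M ≤ total i P + 1) &&
    (List.range 2).all fun k => total (3 + k) P ≤ total (3 + k) M + 1

def signable (P M : List ℕ) : List ℕ → Bool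
  | [] => isFair P M
  | t :: l => signable (t :: P) M l || signable P (t :: M) l

theorem allPairwiseSublists_mixedTypes :
    allPairwiseSublists isIncomparable (signable [] []) mixedTypes [] = true := by
  decide +kernel

theorem likes_nonneg (i t : ℕ) : 0 ≤ likes i t := by
  unfold likes; split_ifs <;> norm_num

theorem dominates_of_isDominating {t u : ℕ} (h : isDominating t u) :
    Dominates groupOne groupTwo t u := by
  simp only [isDominating, Bool.and_eq_true, List.all_eq_true, List.mem_range,
    decide_eq_true_eq] at h
  exact ⟨fun i => Int.cast_le.2 (h.1 i i.2), fun k => Int.cast_le.2 (h.2 k k.2)⟩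

theorem isIncomparable_symm {t u : ℕ} (h : isIncomparable t u) : isIncomparable u t := by
  simp only [isIncomparable, Bool.and_eq_true] at h ⊢
  exact h.symm

theorem isIncomparable_self (t : ℕ) : isIncomparable t t = false := by
  simp [isIncomparable, isDominating]

theorem signable_sound : ∀ {l P M : List ℕ}, signable P M l →
    ∃ P' M', (P' ++ M').Perm (l ++ P ++ M) ∧ isFair P' M'
  | [], P, M, h => ⟨P, M, by simp, h⟩
  | t :: l, P, M, h => by
    rw [signable, Bool.or_eq_true] at h
    rcases h with h | h
    · obtain ⟨P', M', hperm, hfair⟩ := signable_sound h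
      exact ⟨P', M', hperm.trans (List.perm_middle.append_right M), hfair⟩
    · obtain ⟨P', M', hperm, hfair⟩ := signable_sound h
      exact ⟨P', M', hperm.trans List.perm_middle, hfair⟩

theorem sum_toFinset_likes {l : List ℕ} (hl : l.Nodup) (i : ℕ) :
    ∑ t ∈ l.toFinset, (likes i t : ℝ) = total i l := by
  rw [List.sum_toFinset _ hl, total, Int.cast_list_sum, List.map_map]
  rfl

theorem fairSplit_of_isFair {P M : List ℕ} (hP : P.Nodup) (hM : M.Nodup) (h : isFair P M) :
    FairSplit groupOne groupTwo P.toFinset M.toFinset := by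
  simp only [isFair, Bool.and_eq_true, List.all_eq_true, List.mem_range, decide_eq_true_eq] at h
  refine ⟨fun i => ?_, fun k => ?_⟩
  · simp only [groupOne, sum_toFinset_likes hP, sum_toFinset_likes hM]
    exact_mod_cast h.1 i i.2
  · simp only [groupTwo, sum_toFinset_likes hP, sum_toFinset_likes hM]
    exact_mod_cast h.2 k k.2

theorem hasFairSplit_of_signable {l : List ℕ} (hl : l.Nodup) (h : signable [] [] l) :
    HasFairSplit groupOne groupTwo l.toFinset := by
  obtain ⟨P, M, hperm, hfair⟩ := signable_sound h
  rw [List.append_nil, List.append_nil] at hperm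
  obtain ⟨hP, hM, hPM⟩ := List.nodup_append.1 (hperm.nodup_iff.2 hl)
  refine ⟨P.toFinset, M.toFinset, ?_, ?_, fairSplit_of_isFair hP hM hfair⟩
  · exact List.disjoint_toFinset_iff_disjoint.2 fun t htP htM => hPM t htP t htM rfl
  · rw [← List.toFinset_append, List.toFinset_eq_of_perm _ _ hperm]

theorem hasFairSplit_of_reduced {T : Finset ℕ} (hT : ∀ t ∈ T, t < 2 ^ 5)
    (hred : Reduced groupOne groupTwo T) : HasFairSplit groupOne groupTwo T := by
  set l := mixedTypes.filter (· ∈ T)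
  have hmixed : ∀ t ∈ T, t ∈ mixedTypes := by
    intro t ht
    obtain ⟨⟨i, hi⟩, ⟨k, hk⟩, -⟩ := hred t ht
    simp only [mixedTypes, List.mem_filter, List.mem_range, Bool.and_eq_true, List.any_eq_true,
      decide_eq_true_eq]
    exact ⟨hT t ht, ⟨i, i.2, Int.cast_pos.1 hi⟩, ⟨k, k.2, Int.cast_pos.1 hk⟩⟩
  have hl : l.toFinset = T := by
    ext t
    simpa [l] using hmixed t
  have hpw : l.Pairwise (isIncomparable · ·) := by
    refine (List.nodup_range.filter _ |>.filter _).pairwise_of_forall_ne fun t ht u hu htu => ?_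
    have htT : t ∈ T := by simpa using (List.mem_filter.1 ht).2
    have huT : u ∈ T := by simpa using (List.mem_filter.1 hu).2
    simp only [isIncomparable, Bool.and_eq_true, Bool.not_eq_true']
    refine ⟨Bool.eq_false_iff.2 fun hd => htu ?_, Bool.eq_false_iff.2 fun hd => htu ?_⟩
    · exact (hred t htT).2.2 u huT (dominates_of_isDominating hd)
    · exact ((hred u huT).2.2 t htT (dominates_of_isDominating hd)).symm
  have hnodup : ∀ l' : List ℕ, l'.Pairwise (isIncomparable · ·) → l'.Nodup := fun _ hpw' =>
    hpw'.imp fun {t u} h htu => by simp [htu, isIncomparable_self] at h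
  rw [← hl]
  simpa using allPairwiseSublists_sound (fun _ _ => isIncomparable_symm)
    (Q := fun l => HasFairSplit groupOne groupTwo l.toFinset)
    (fun hperm => by rw [List.toFinset_eq_of_perm _ _ hperm]; exact id)
    (fun l' hpw' h => hasFairSplit_of_signable (hnodup l' hpw') h) allPairwiseSublists_mixedTypes l
    List.filter_sublist (by simpa using hpw)

theorem exists_code_of_binary {α : Type*} {p : Fin 3 → α → ℝ} {q : Fin 2 → α → ℝ}
    (hp : ∀ i g, p i g = 0 ∨ p i g = 1) (hq : ∀ k g, q k g = 0 ∨ q k g = 1) :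
    ∃ c : α → ℕ, (∀ g, c g < 2 ^ 5) ∧
      p = (fun i g => groupOne i (c g)) ∧ q = fun k g => groupTwo k (c g) := by
  classical
  refine ⟨fun g => Nat.bit (p 0 g = 1) (Nat.bit (p 1 g = 1) (Nat.bit (p 2 g = 1)
    (Nat.bit (q 0 g = 1) (Nat.bit (q 1 g = 1) 0)))), fun g => ?_, ?_, ?_⟩
  · simp only [Nat.bit_lt_two_pow_succ_iff]
    simp
  · funext i g
    have := eq_ite_of_eq_zero_or_eq_one (hp i g)
    fin_cases i <;> simpa [groupOne, likes, Nat.testBit_bit_succ] using this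
  · funext k g
    have := eq_ite_of_eq_zero_or_eq_one (hq k g)
    fin_cases k <;> simpa [groupTwo, likes, Nat.testBit_bit_succ] using this

theorem hasFairSplit_of_binary {α : Type*} [DecidableEq α] {p : Fin 3 → α → ℝ}
    {q : Fin 2 → α → ℝ} (hp : ∀ i g, p i g = 0 ∨ p i g = 1) (hq : ∀ k g, q k g = 0 ∨ q k g = 1)
    (S : Finset α) : HasFairSplit p q S := by
  obtain ⟨c, hc, rfl, rfl⟩ := exists_code_of_binary hp hq
  refine hasFairSplit_of_forall_reduced (fun i g => Int.cast_nonneg (likes_nonneg _ _))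
    (fun k g => Int.cast_nonneg (likes_nonneg _ _)) (fun S hS => ?_) S
  have hT : ∀ t ∈ S.image c, t < 2 ^ 5 := by
    simpa only [forall_mem_image] using fun g _ => hc g
  exact .of_image (hS.injOn (p := groupOne) (q := groupTwo))
    (hasFairSplit_of_reduced hT (hS.image (p := groupOne) (q := groupTwo)))

end GoodType

/-- For groups of sizes (3,2) and binary valuations, an EF1 allocation always exists. -/
theorem binary_3_2_EF1 (γ : Type*) [Fintype γ] [DecidableEq γ]
    (u : Fin 3 → Finset γ → ℝ) (v : Fin 2 → Finset γ → ℝ)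
    (hu : ∀ j, Binary (u j)) (hv : ∀ j, Binary (v j)) :
    ∃ B₁ B₂ : Finset γ, Disjoint B₁ B₂ ∧ B₁ ∪ B₂ = Finset.univ ∧
      (∀ j, EF1 (u j) B₁ B₂) ∧ (∀ j, EF1 (v j) B₂ B₁) := by
  obtain ⟨B₁, B₂, hdisj, hunion, hfair⟩ :=
    GoodType.hasFairSplit_of_binary (p := fun j g => u j {g}) (q := fun j g => v j {g})
      (fun j => (hu j).2) (fun j => (hv j).2) univ
  exact ⟨B₁, B₂, hdisj, hunion, fun j => (hu j).ef1_of_sum_le_sum_add_one (hfair.1 j),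
    fun j => (hv j).ef1_of_sum_le_sum_add_one (hfair.2 j)⟩
end

section
/- There exists an instance with two groups of agents of sizes 6 and 1, where all seven agents have binary valuations over a finite set G of goods, such that no allocation (B₁, B₂) of G to the two groups is EF1 for every agent. -/
open Finset

variable {γ : Type*} [DecidableEq γ]

/-!
Take four goods. The agent of group 2 values every good; the six agents of group 1 value the
six 2-element sets of goods, one each. If group 2's agent is EF1 then `#B₁ ≤ #B₂ + 1`, so `B₂`
holds at least two goods and hence contains one of the pairs. The group-1 agent valuing that
pair sees `0` in `B₁` and `2` in `B₂`, so removing a single good does not remove the envy.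
-/

def countVal (A S : Finset γ) : ℝ := #(S ∩ A)

lemma binary_countVal (A : Finset γ) : Binary (countVal A) := by
  refine ⟨fun S => ?_, fun g => ?_⟩
  · simp only [countVal, ← filter_mem_eq_inter, card_filter, Nat.cast_sum]
    refine sum_congr rfl fun g _ => ?_
    by_cases hg : g ∈ A <;> simp [hg]
  · by_cases hg : g ∈ A <;> simp [countVal, hg]

lemma card_inter_le_succ_of_EF1 {A mine other : Finset γ} (h : EF1 (countVal A) mine other) :
    #(other ∩ A) ≤ #(mine ∩ A) + 1 := by
  obtain ⟨B, -, hB, hle⟩ := h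
  have hle : #((other \ B) ∩ A) ≤ #(mine ∩ A) := by
    simpa only [countVal, Nat.cast_le] using hle
  have hsub : other ∩ A ⊆ (other \ B) ∩ A ∪ B := by
    intro x hx
    by_cases hxB : x ∈ B <;> simp_all
  have := (card_le_card hsub).trans (card_union_le _ _)
  omega

def fourPairs : Fin 6 → Finset (Fin 4) :=
  ![{0, 1}, {0, 2}, {0, 3}, {1, 2}, {1, 3}, {2, 3}]

lemma card_fourPairs : ∀ j, #(fourPairs j) = 2 := by
  decide

lemma exists_fourPairs_eq : ∀ P : Finset (Fin 4), #P = 2 → ∃ j, fourPairs j = P := by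
  decide

lemma exists_fourPairs_subset {S : Finset (Fin 4)} (hS : 2 ≤ #S) : ∃ j, fourPairs j ⊆ S := by
  obtain ⟨P, hPS, hP⟩ := exists_subset_card_eq hS
  obtain ⟨j, rfl⟩ := exists_fourPairs_eq P hP
  exact ⟨j, hPS⟩

/-- For groups of sizes (6,1) and binary valuations, an EF1 allocation
does not always exist. -/
theorem binary_6_1_no_EF1 :
    ∃ (m : ℕ) (u : Fin 6 → Finset (Fin m) → ℝ) (v : Finset (Fin m) → ℝ),
      (∀ j, Binary (u j)) ∧ Binary v ∧
      ∀ B₁ B₂ : Finset (Fin m), Disjoint B₁ B₂ → B₁ ∪ B₂ = Finset.univ →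
        ¬ ((∀ j, EF1 (u j) B₁ B₂) ∧ EF1 v B₂ B₁) := by
  refine ⟨4, fun j => countVal (fourPairs j), countVal univ,
    fun j => binary_countVal _, binary_countVal _, ?_⟩
  rintro B₁ B₂ hdisj hcover ⟨hgroup₁, hgroup₂⟩
  have hcard : #B₁ + #B₂ = 4 := by
    rw [← card_union_of_disjoint hdisj, hcover, card_univ, Fintype.card_fin]
  have hB₁ : #B₁ ≤ #B₂ + 1 := by
    simpa only [inter_univ] using card_inter_le_succ_of_EF1 hgroup₂
  obtain ⟨j, hj⟩ := exists_fourPairs_subset (S := B₂) (by omega)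
  have henvy := card_inter_le_succ_of_EF1 (hgroup₁ j)
  rw [inter_eq_right.mpr hj, disjoint_iff_inter_eq_empty.mp (hdisj.mono_right hj), card_empty,
    card_fourPairs] at henvy
  omega
end

section
/- For every positive integer c, there exists an instance with two groups of agents, each of size binomial(2c+1, c+1), where all agents have binary valuations over a finite set G of goods, such that no allocation (B₁, B₂) of G to the two groups is EFc for every agent. -/
open Finset

variable {γ : Type*} [DecidableEq γ]

/-- An allocation is EFc for an agent with valuation `u` whose group receives `mine`,
the other group receiving `other`: some set of at most `c` goods can be removed from
`other` so that the agent values `mine` at least as much. -/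
def EF (c : ℕ) (u : Finset γ → ℝ) (mine other : Finset γ) : Prop :=
  ∃ B ⊆ other, B.card ≤ c ∧ u (other \ B) ≤ u mine

/-- The indicator valuation of a target set `T`. -/
def indVal {m : ℕ} (T : Finset (Fin m)) : Finset (Fin m) → ℝ :=
  fun S => ∑ g ∈ S, if g ∈ T then (1 : ℝ) else 0

lemma indVal_binary {m : ℕ} (T : Finset (Fin m)) : Binary (indVal T) := by
  constructor
  · intro S
    simp only [indVal, Finset.sum_singleton]
  · intro g
    simp only [indVal, Finset.sum_singleton]
    by_cases h : g ∈ T <;> simp [h]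

lemma not_EF_indVal {m c : ℕ} (B₁ B₂ S : Finset (Fin m)) (hd : Disjoint B₁ B₂)
    (hS : S ⊆ B₂) (hScard : S.card = c + 1) : ¬ EF c (indVal S) B₁ B₂ := by
  rintro ⟨B, hB, hBc, hle⟩
  have h0 : indVal S B₁ = 0 := by
    apply Finset.sum_eq_zero
    intro g hg
    have : g ∉ S := fun hgS => (Finset.disjoint_left.mp hd hg) (hS hgS)
    simp [this]
  have hne : (S \ B).Nonempty := by
    rw [← Finset.card_pos]
    have := Finset.le_card_sdiff B S
    omega
  obtain ⟨g, hg⟩ := hne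
  have hgS : g ∈ S := (Finset.mem_sdiff.mp hg).1
  have hgB : g ∉ B := (Finset.mem_sdiff.mp hg).2
  have hgmem : g ∈ B₂ \ B := Finset.mem_sdiff.mpr ⟨hS hgS, hgB⟩
  have h1 : (1 : ℝ) ≤ indVal S (B₂ \ B) := by
    have := Finset.single_le_sum (f := fun x => if x ∈ S then (1 : ℝ) else 0)
      (fun x _ => by by_cases h : x ∈ S <;> simp [h]) hgmem
    simpa [indVal, hgS] using this
  rw [h0] at hle
  linarith

/-- For any positive integer `c` and two groups each of size `(2c+1) choose (c+1)` with
binary valuations, an EFc allocation does not always exist. -/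
theorem binary_no_EFc (c : ℕ) (hc : 0 < c) :
    ∃ (m : ℕ)
      (u : Fin (Nat.choose (2 * c + 1) (c + 1)) → Finset (Fin m) → ℝ)
      (v : Fin (Nat.choose (2 * c + 1) (c + 1)) → Finset (Fin m) → ℝ),
      (∀ j, Binary (u j)) ∧ (∀ j, Binary (v j)) ∧
      ∀ B₁ B₂ : Finset (Fin m), Disjoint B₁ B₂ → B₁ ∪ B₂ = Finset.univ →
        ¬ ((∀ j, EF c (u j) B₁ B₂) ∧ (∀ j, EF c (v j) B₂ B₁)) := by
  set m := 2 * c + 1 with hm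
  set P := (Finset.univ : Finset (Fin m)).powersetCard (c + 1) with hP
  have hcard : P.card = Nat.choose (2 * c + 1) (c + 1) := by
    simp [hP, Finset.card_powersetCard, hm]
  let f : Fin (Nat.choose (2 * c + 1) (c + 1)) → Finset (Fin m) :=
    fun j => (P.equivFin.symm (finCongr hcard.symm j) : Finset (Fin m))
  have hsurj : ∀ S ∈ P, ∃ j, f j = S := by
    intro S hS
    refine ⟨finCongr hcard (P.equivFin ⟨S, hS⟩), ?_⟩
    simp [f]
  refine ⟨m, fun j => indVal (f j), fun j => indVal (f j),
    fun j => indVal_binary _, fun j => indVal_binary _, ?_⟩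
  intro B₁ B₂ hd hu ⟨h1, h2⟩
  have hsum : B₁.card + B₂.card = 2 * c + 1 := by
    rw [← Finset.card_union_of_disjoint hd, hu]
    simp [hm]
  rcases le_or_gt B₁.card c with h | h
  · -- B₂ has ≥ c+1 goods; an agent in group 1 targets S ⊆ B₂
    have hB2 : c + 1 ≤ B₂.card := by omega
    obtain ⟨S, hS, hScard⟩ := Finset.exists_subset_card_eq hB2
    have hSP : S ∈ P := Finset.mem_powersetCard.mpr ⟨Finset.subset_univ S, hScard⟩
    obtain ⟨j, hj⟩ := hsurj S hSP
    exact not_EF_indVal B₁ B₂ S hd hS hScard (hj ▸ h1 j)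
  · have hB1 : c + 1 ≤ B₁.card := by omega
    obtain ⟨S, hS, hScard⟩ := Finset.exists_subset_card_eq hB1
    have hSP : S ∈ P := Finset.mem_powersetCard.mpr ⟨Finset.subset_univ S, hScard⟩
    obtain ⟨j, hj⟩ := hsurj S hSP
    exact not_EF_indVal B₂ B₁ S hd.symm hS hScard (hj ▸ h2 j)
end

section
/- There exists an instance with two groups of agents of sizes 3 and 3, where all six agents have binary valuations over a finite set G of goods, such that no allocation (B₁, B₂) of G to the two groups is EF1 for every agent. -/
open Finset

variable {γ : Type*} [DecidableEq γ]

lemma binary_of_inter (A : Finset γ) :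
    Binary (fun S => ((S ∩ A).card : ℝ)) := by
  constructor
  · intro S
    have h1 : ∀ g : γ, (({g} ∩ A).card : ℝ) = if g ∈ A then 1 else 0 := by
      intro g
      by_cases h : g ∈ A
      · simp [Finset.singleton_inter_of_mem h, h]
      · simp [Finset.singleton_inter_of_notMem h, h]
    simp only [h1]
    rw [Finset.sum_ite_mem]
    have : (S ∩ A).card = ∑ _g ∈ S ∩ A, (1:ℕ) := by rw [Finset.card_eq_sum_ones]
    rw [this]
    push_cast
    ring
  · intro g
    by_cases h : g ∈ A
    · right; simp [Finset.singleton_inter_of_mem h]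
    · left; simp [Finset.singleton_inter_of_notMem h]

lemma ef1_card (A mine other : Finset γ)
    (h : EF1 (fun S => ((S ∩ A).card : ℝ)) mine other) :
    (other ∩ A).card ≤ (mine ∩ A).card + 1 := by
  obtain ⟨B, hB, hcard, hle⟩ := h
  have hle2 : ((((other \ B) ∩ A).card : ℝ)) ≤ (((mine ∩ A).card : ℝ)) := hle
  have hle' : ((other \ B) ∩ A).card ≤ (mine ∩ A).card := by exact_mod_cast hle2
  have hsub : other ∩ A ⊆ ((other \ B) ∩ A) ∪ B := by
    intro x hx
    simp only [mem_inter, mem_union, mem_sdiff] at *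
    by_cases hxB : x ∈ B
    · exact Or.inr hxB
    · exact Or.inl ⟨⟨hx.1, hxB⟩, hx.2⟩
  calc (other ∩ A).card ≤ (((other \ B) ∩ A) ∪ B).card := card_le_card hsub
    _ ≤ ((other \ B) ∩ A).card + B.card := card_union_le _ _
    _ ≤ (mine ∩ A).card + 1 := by omega

/-- For groups of sizes (3,3) and binary valuations, an EF1 allocation
does not always exist. -/
theorem binary_3_3_no_EF1 :
    ∃ (m : ℕ) (u : Fin 3 → Finset (Fin m) → ℝ) (v : Fin 3 → Finset (Fin m) → ℝ),
      (∀ j, Binary (u j)) ∧ (∀ j, Binary (v j)) ∧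
      ∀ B₁ B₂ : Finset (Fin m), Disjoint B₁ B₂ → B₁ ∪ B₂ = Finset.univ →
        ¬ ((∀ j, EF1 (u j) B₁ B₂) ∧ (∀ j, EF1 (v j) B₂ B₁)) := by
  refine ⟨4, fun j S => ((S ∩ ![{1,2},{0,3},{1,3}] j).card : ℝ),
            fun j S => ((S ∩ ![{0,1},{2,3},{1,3}] j).card : ℝ),
            fun j => binary_of_inter _, fun j => binary_of_inter _, ?_⟩
  intro B₁ B₂ hdis huniv ⟨h1, h2⟩
  have hB₂ : B₂ = Finset.univ \ B₁ := by
    rw [← huniv]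
    rw [union_sdiff_cancel_left hdis]
  subst hB₂
  have k1 := fun j => ef1_card _ _ _ (h1 j)
  have k2 := fun j => ef1_card _ _ _ (h2 j)
  have key : ∀ B : Finset (Fin 4),
      ¬ ((∀ j : Fin 3, ((Finset.univ \ B) ∩ ![{1,2},{0,3},{1,3}] j).card ≤ (B ∩ ![{1,2},{0,3},{1,3}] j).card + 1) ∧
         (∀ j : Fin 3, (B ∩ ![{0,1},{2,3},{1,3}] j).card ≤ ((Finset.univ \ B) ∩ ![{0,1},{2,3},{1,3}] j).card + 1)) := by
    decide
  exact key B₁ ⟨k1, k2⟩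
end

section
/- There exists an instance with two groups of agents of sizes 2 and 1, where all three agents have binary valuations over a finite set G of goods, such that no allocation (B₁, B₂) of G to the two groups is EFX₀ for every agent. -/
open Finset

variable {γ : Type*} [DecidableEq γ]

/-- An allocation is EFX₀ for an agent with valuation `u` whose group receives `mine`,
the other group receiving `other`: removing any single good from `other` makes the agent
value `mine` at least as much. -/
def EFX0 (u : Finset γ → ℝ) (mine other : Finset γ) : Prop :=
  ∀ g ∈ other, u (other \ {g}) ≤ u mine

def cardVal (w : Finset (Fin 6)) : Finset (Fin 6) → ℝ := fun S => ((S ∩ w).card : ℝ)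

lemma cardVal_binary (w : Finset (Fin 6)) : Binary (cardVal w) := by
  constructor
  · intro S
    unfold cardVal
    rw [← Nat.cast_sum]
    congr 1
    rw [show S ∩ w = S.filter (· ∈ w) by rw [Finset.filter_mem_eq_inter], Finset.card_filter]
    refine Finset.sum_congr rfl fun g _ => ?_
    by_cases h : g ∈ w <;>
      simp [h, Finset.singleton_inter_of_mem, Finset.singleton_inter_of_notMem]
  · intro g
    unfold cardVal
    by_cases h : g ∈ w <;>
      simp [Finset.singleton_inter_of_mem, Finset.singleton_inter_of_notMem, h]

lemma key : ∀ B₁ : Finset (Fin 6),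
    ¬ ((∀ g ∈ B₁ᶜ, ((B₁ᶜ \ {g}) ∩ ({0,1,2} : Finset (Fin 6))).card ≤ (B₁ ∩ {0,1,2}).card) ∧
       (∀ g ∈ B₁ᶜ, ((B₁ᶜ \ {g}) ∩ ({3,4,5} : Finset (Fin 6))).card ≤ (B₁ ∩ {3,4,5}).card) ∧
       (∀ g ∈ B₁, ((B₁ \ {g}) ∩ ({0,1,2,3,4} : Finset (Fin 6))).card ≤ (B₁ᶜ ∩ {0,1,2,3,4}).card)) := by
  decide

/-- For groups of sizes (2,1) and binary valuations, an EFX₀ allocation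
does not always exist. -/
theorem binary_2_1_no_EFX0 :
    ∃ (m : ℕ) (u : Fin 2 → Finset (Fin m) → ℝ) (v : Finset (Fin m) → ℝ),
      (∀ j, Binary (u j)) ∧ Binary v ∧
      ∀ B₁ B₂ : Finset (Fin m), Disjoint B₁ B₂ → B₁ ∪ B₂ = Finset.univ →
        ¬ ((∀ j, EFX0 (u j) B₁ B₂) ∧ EFX0 v B₂ B₁) := by
  refine ⟨6, fun j => if j = 0 then cardVal {0,1,2} else cardVal {3,4,5},
    cardVal {0,1,2,3,4}, ?_, cardVal_binary _, ?_⟩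
  · intro j
    by_cases h : j = 0 <;> simp [h, cardVal_binary]
  · intro B₁ B₂ hdisj hun ⟨h1, h2⟩
    have hB₂ : B₂ = B₁ᶜ := by
      ext g
      simp only [Finset.mem_compl]
      constructor
      · intro hg hg'
        exact (Finset.disjoint_left.mp hdisj) hg' hg
      · intro hg
        have : g ∈ B₁ ∪ B₂ := hun ▸ Finset.mem_univ g
        rcases Finset.mem_union.mp this with h | h
        · exact absurd h hg
        · exact h
    subst hB₂
    refine key B₁ ⟨?_, ?_, ?_⟩
    · intro g hg
      have := h1 0 g hg
      simpa [EFX0, cardVal, Nat.cast_le] using this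
    · intro g hg
      have := h1 1 g hg
      simpa [EFX0, cardVal, Nat.cast_le] using this
    · intro g hg
      have := h2 g hg
      simpa [EFX0, cardVal, Nat.cast_le] using this
end

section
/- For any instance with two groups of agents of sizes 2 and 1, where all three agents have responsive (monotonic, normalized) valuations over a finite set G of goods, there exists an allocation (B₁, B₂) of G to the two groups with ||B₁| − |B₂|| ≤ 1 that is EF1 for every agent. -/
/-
For each agent of the first group, list the goods by decreasing singleton value and pair the
first with the second, the third with the fourth, and so on. Encode each pairing as an involutive
permutation. The two pairings together form a graph of maximum degree two in which every cycle
alternates between them, hence has even length, so some 2-colouring separates every pair of both.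
The colour classes are balanced. Moreover, for each such agent, every good in one class other
than its best one can be exchanged, by responsiveness, for the good of the other class in the
preceding pair; so each class is EF1 against the other. The agent of the second group takes the
class she prefers.
-/

open Finset

variable {γ : Type*} [DecidableEq γ]

/-- A valuation is monotonic if larger sets are weakly more valuable. -/
def Monotonic (u : Finset γ → ℝ) : Prop :=
  ∀ ⦃S T : Finset γ⦄, S ⊆ T → u S ≤ u T

/-- A valuation is normalized if the empty set has value zero. -/
def Normalized (u : Finset γ → ℝ) : Prop :=
  u ∅ = 0

/-- A valuation is responsive if replacing a good outside a set by a weakly better good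
(with respect to singleton values) weakly increases the value of the set. -/
def Responsive (u : Finset γ → ℝ) : Prop :=
  ∀ (S : Finset γ) (g g' : γ), g ∉ S → g' ∉ S → u {g'} ≤ u {g} →
    u (insert g' S) ≤ u (insert g S)

open Equiv

section Separation

variable {α : Type*}

def Separates (c : α → Bool) (σ : Perm α) : Prop :=
  ∀ x, σ x ≠ x → c (σ x) ≠ c x

theorem Separates.not {c : α → Bool} {σ : Perm α}
    (hc : Separates c σ) : Separates (fun x => !c x) σ := fun x hx => by
  simpa using hc x hx

variable [DecidableEq α]

theorem apply_swap_apply_comm {ρ : Perm α} (hρ : Function.Involutive ρ) (x z : α) :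
    ρ (swap x (ρ x) z) = swap x (ρ x) (ρ z) := by
  rw [swap_apply_def, swap_apply_def]
  by_cases h1 : z = x
  · subst h1; simp [hρ z, eq_comm]
  by_cases h2 : z = ρ x
  · subst h2; simp [hρ x]
  have h3 : ρ z ≠ x := fun h => h2 (by rw [← h, hρ])
  have h4 : ρ z ≠ ρ x := fun h => h1 (ρ.injective h)
  simp [h1, h2, h3, h4]

theorem involutive_swap_mul {σ : Perm α} (hσ : Function.Involutive σ) (x : α) :
    Function.Involutive (swap x (σ x) * σ) := fun z => by
  simp [apply_swap_apply_comm hσ, hσ z]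

theorem Separates.update {c : α → Bool} {σ : Perm α} (hσ : Function.Involutive σ) {x : α}
    {b : Bool} (hc : Separates c (swap x (σ x) * σ)) (hb : σ x ≠ x → b ≠ c (σ x)) :
    Separates (Function.update c x b) σ := by
  intro z hz
  by_cases hzx : z = x
  · subst hzx
    simpa [Function.update_of_ne hz] using (hb hz).symm
  by_cases hzy : z = σ x
  · subst hzy
    rw [hσ, Function.update_self, Function.update_of_ne hzx]
    exact hb (fun h => hzx (by rw [← h, hσ, h]))
  · have h1 : σ z ≠ x := fun h => hzy (by rw [← h, hσ])
    have h2 : σ z ≠ σ x := fun h => hzx (σ.injective h)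
    have := hc z (by simpa [swap_apply_of_ne_of_ne h1 h2] using hz)
    simpa [swap_apply_of_ne_of_ne h1 h2, Function.update_of_ne h1, Function.update_of_ne hzx]
      using this

theorem Separates.comp_swap {c : α → Bool} {ρ : Perm α} (hρ : Function.Involutive ρ)
    (hc : Separates c ρ) (x : α) : Separates (c ∘ swap x (ρ x)) ρ := by
  intro z hz
  simp only [Function.comp_apply, ← apply_swap_apply_comm hρ]
  exact hc _ (fun h => hz (by simpa [apply_swap_apply_comm hρ] using h))

theorem Separates.of_conj_swap {c : α → Bool} {σ τ : Perm α} (hτ : Function.Involutive τ)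
    {x : α} (hx : σ x ≠ x) (hya : τ x ≠ σ x) (hyb : τ (σ x) ≠ σ x)
    (hσ : Separates c σ) (hc : Separates c (swap (σ x) (τ x) * τ * swap (σ x) (τ x)))
    (hca : c x ≠ c (τ x)) : Separates c τ := by
  set y := σ x
  set a := τ x
  set b := τ y
  have hab : b ≠ a := fun h => hx (τ.injective h)
  have hcb : c b ≠ c a := by
    have hτa : (swap y a * τ * swap y a) a = b := by
      rw [Perm.mul_apply, Perm.mul_apply, swap_apply_right]
      exact swap_apply_of_ne_of_ne hyb hab
    simpa [hτa] using hc a (by rw [hτa]; exact hab)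
  have hcy : c y = c a := by
    have := hσ x hx
    revert hca this; cases c x <;> cases c y <;> cases c a <;> simp
  intro z hz
  by_cases hzx : z = x
  · subst hzx; exact hca.symm
  by_cases hza : z = a
  · subst hza; rw [hτ]; exact hca
  by_cases hzy : z = y
  · subst hzy; rw [hcy]; exact hcb
  by_cases hzb : z = b
  · subst hzb; rw [hτ, hcy]; exact hcb.symm
  have h1 : τ z ≠ y := fun h => hzb (by show z = τ y; rw [← h, hτ])
  have h2 : τ z ≠ a := fun h => hzx (τ.injective h)
  have hτz : (swap y a * τ * swap y a) z = τ z := by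
    simp [swap_apply_of_ne_of_ne hzy hza, swap_apply_of_ne_of_ne h1 h2]
  simpa [hτz] using hc z (by rwa [hτz])

variable [Fintype α]

theorem card_support_swap_mul_le (f : Perm α) (x : α) :
    #(swap x (f x) * f).support ≤ #f.support := by
  by_cases hx : f x = x
  · rw [hx, swap_self, ← Perm.one_def, one_mul]
  · exact (Perm.card_support_swap_mul hx).le

theorem exists_separates_of_leaf {σ τ : Perm α} (hσ : Function.Involutive σ)
    (hτ : Function.Involutive τ) {x : α} (hx : σ x ≠ x) (hτx : τ x = x ∨ τ x = σ x)
    (ih : ∀ σ' τ' : Perm α, Function.Involutive σ' → Function.Involutive τ' →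
      #σ'.support + #τ'.support < #σ.support + #τ.support →
      ∃ c, Separates c σ' ∧ Separates c τ') :
    ∃ c, Separates c σ ∧ Separates c τ := by
  obtain ⟨c, hcσ, hcτ⟩ := ih _ _ (involutive_swap_mul hσ x) (involutive_swap_mul hτ x)
    (add_lt_add_of_lt_of_le (Perm.card_support_swap_mul hx) (card_support_swap_mul_le τ x))
  refine ⟨Function.update c x (!c (σ x)), hcσ.update hσ fun _ => ?_, hcτ.update hτ fun h => ?_⟩
  · simp
  · rcases hτx with h' | h'
    · exact absurd h' h
    · simp [h']

/-- Unless `x` is a leaf, conjugating `τ` by `swap (σ x) (τ x)` replaces the path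
`τ x - x - σ x - τ (σ x)` by the pairs `{x, σ x}` and `{τ x, τ (σ x)}`; this makes `x` a leaf
and does not change the number of moved points. -/
theorem exists_separates_of_ne {σ τ : Perm α} (hσ : Function.Involutive σ)
    (hτ : Function.Involutive τ) {x : α} (hx : σ x ≠ x)
    (ih : ∀ σ' τ' : Perm α, Function.Involutive σ' → Function.Involutive τ' →
      #σ'.support + #τ'.support < #σ.support + #τ.support →
      ∃ c, Separates c σ' ∧ Separates c τ') :
    ∃ c, Separates c σ ∧ Separates c τ := by
  by_cases hxa : τ x = x ∨ τ x = σ x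
  · exact exists_separates_of_leaf hσ hτ hx hxa ih
  by_cases hyb : τ (σ x) = σ x ∨ τ (σ x) = x
  · refine exists_separates_of_leaf hσ hτ (x := σ x) ?_ (by rwa [hσ x]) ih
    rw [hσ x]; exact hx.symm
  push Not at hxa hyb
  set τ' := swap (σ x) (τ x) * τ * swap (σ x) (τ x)
  have hτ' : Function.Involutive τ' := fun z => by simp [τ', hτ _]
  have hτ'x : τ' x = σ x := by
    simp [τ', swap_apply_of_ne_of_ne hx.symm hxa.1.symm]
  have hcard : #τ'.support = #τ.support := by
    simpa only [swap_inv] using Perm.card_support_conj (σ := swap (σ x) (τ x)) (τ := τ)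
  obtain ⟨c, hcσ, hcτ'⟩ := exists_separates_of_leaf hσ hτ' hx (Or.inr hτ'x) (by rwa [hcard])
  by_cases hca : c x ≠ c (τ x)
  · exact ⟨c, hcσ, hcσ.of_conj_swap hτ hx hxa.2 hyb.1 hcτ' hca⟩
  · refine ⟨c ∘ swap x (σ x), hcσ.comp_swap hσ x, (hcσ.comp_swap hσ x).of_conj_swap hτ hx
      hxa.2 hyb.1 (by simpa [hτ'x] using hcτ'.comp_swap hτ' x) ?_⟩
    simp [swap_apply_of_ne_of_ne hxa.1 hxa.2, ← not_not.mp hca, hcσ x hx]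

theorem exists_separates (σ τ : Perm α) (hσ : Function.Involutive σ)
    (hτ : Function.Involutive τ) : ∃ c, Separates c σ ∧ Separates c τ := by
  by_cases hσ₁ : ∃ x, σ x ≠ x
  · obtain ⟨x, hx⟩ := hσ₁
    exact exists_separates_of_ne hσ hτ hx fun σ' τ' h₁ h₂ _ => exists_separates σ' τ' h₁ h₂
  by_cases hτ₁ : ∃ x, τ x ≠ x
  · obtain ⟨x, hx⟩ := hτ₁
    refine (exists_separates_of_ne hτ hσ hx fun σ' τ' h₁ h₂ _ => ?_).imp fun _ => And.symm
    exact (exists_separates τ' σ' h₂ h₁).imp fun _ => And.symm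
  push Not at hσ₁ hτ₁
  exact ⟨fun _ => true, fun x hx => absurd (hσ₁ x) hx, fun x hx => absurd (hτ₁ x) hx⟩
termination_by #σ.support + #τ.support
decreasing_by all_goals omega

end Separation

section Pairing

variable {α : Type*} [DecidableEq α]

def pairing : List α → Perm α
  | p :: q :: R => swap p q * pairing R
  | _ => 1

theorem pairing_apply_of_notMem {R : List α} {x : α} (hx : x ∉ R) : pairing R x = x := by
  induction R using List.twoStepInduction with
  | nil => rfl
  | singleton p => rfl
  | cons_cons p q R ih _ =>
    simp only [List.mem_cons, not_or] at hx
    simp [pairing, ih hx.2.2, swap_apply_of_ne_of_ne hx.1 hx.2.1]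

theorem pairing_apply_ne {R : List α} {p z : α} (hp : p ∉ R) (hz : z ≠ p) :
    pairing R z ≠ p :=
  fun h => hz ((pairing R).injective (h.trans (pairing_apply_of_notMem hp).symm))

theorem involutive_pairing {R : List α} (hR : R.Nodup) : Function.Involutive (pairing R) := by
  induction R using List.twoStepInduction with
  | nil => intro; rfl
  | singleton p => intro; rfl
  | cons_cons p q R ih _ =>
    simp only [List.nodup_cons, List.mem_cons, not_or] at hR
    obtain ⟨⟨hpq, hpR⟩, hqR, hR⟩ := hR
    intro z
    by_cases hz : z = p ∨ z = q
    · rcases hz with rfl | rfl <;> simp [pairing, pairing_apply_of_notMem, *]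
    · push Not at hz
      simp [pairing, swap_apply_of_ne_of_ne hz.1 hz.2, ih hR z,
        swap_apply_of_ne_of_ne (pairing_apply_ne hpR hz.1) (pairing_apply_ne hqR hz.2)]

theorem Separates.of_pairing_cons_cons {c : α → Bool} {p q : α} {R : List α}
    (hR : (p :: q :: R).Nodup) (hc : Separates c (pairing (p :: q :: R))) :
    c p ≠ c q ∧ Separates c (pairing R) := by
  simp only [List.nodup_cons, List.mem_cons, not_or] at hR
  obtain ⟨⟨hpq, hpR⟩, hqR, -⟩ := hR
  constructor
  · have := hc p (by simpa [pairing, pairing_apply_of_notMem hpR] using Ne.symm hpq)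
    simpa [pairing, pairing_apply_of_notMem hpR] using this.symm
  · intro z hz
    have hzp : z ≠ p := by rintro rfl; exact hz (pairing_apply_of_notMem hpR)
    have hzq : z ≠ q := by rintro rfl; exact hz (pairing_apply_of_notMem hqR)
    have hπz : swap p q (pairing R z) = pairing R z :=
      swap_apply_of_ne_of_ne (pairing_apply_ne hpR hzp) (pairing_apply_ne hqR hzq)
    simpa [pairing, hπz] using hc z (by simpa [pairing, hπz] using hz)

end Pairing

theorem exists_complete_list_pairwise_ge {α : Type*} [Fintype α] (f : α → ℝ) :
    ∃ R : List α, R.Nodup ∧ (∀ x, x ∈ R) ∧ R.Pairwise fun a b => f b ≤ f a := by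
  refine ⟨Finset.univ.toList.mergeSort fun a b => decide (f b ≤ f a), ?_, fun x => ?_, ?_⟩
  · exact (List.mergeSort_perm _ _).nodup_iff.2 (Finset.nodup_toList _)
  · simp [(List.mergeSort_perm _ _).mem_iff]
  · simpa using List.pairwise_mergeSort (le := fun a b => decide (f b ≤ f a))
      (fun a b c hab hbc => by simp only [decide_eq_true_eq] at *; linarith)
      (fun a b => by simpa using le_total (f b) (f a)) Finset.univ.toList

section Exchange

variable {w : Finset γ → ℝ}

theorem EF1.of_le {mine other : Finset γ} (h : w other ≤ w mine) : EF1 w mine other :=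
  ⟨∅, empty_subset _, by simp, by simpa using h⟩

theorem Responsive.insert_union_le (hr : Responsive w) {A B F : Finset γ} {x y g : γ}
    (h : w (A ∪ insert y F) ≤ w (insert x (B ∪ insert y F)))
    (hy : y ∉ insert x (B ∪ F)) (hg : g ∉ insert x (B ∪ F)) (hyg : w {y} ≤ w {g}) :
    w (insert y A ∪ F) ≤ w (insert g (insert x B ∪ F)) :=
  calc w (insert y A ∪ F) = w (A ∪ insert y F) := by rw [insert_union, union_insert]
    _ ≤ w (insert x (B ∪ insert y F)) := h
    _ = w (insert y (insert x (B ∪ F))) := by rw [union_insert, insert_comm]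
    _ ≤ w (insert g (insert x (B ∪ F))) := hr _ g y hg hy hyg
    _ = w (insert g (insert x B ∪ F)) := by rw [insert_union]

theorem Responsive.le_insert_of_separates (hm : Monotonic w) (hr : Responsive w)
    {c : γ → Bool} {R : List γ} (hR : R.Nodup) (hsort : R.Pairwise fun a b => w {b} ≤ w {a})
    (hc : Separates c (pairing R)) {g : γ} (hgR : g ∉ R) (hg : ∀ x ∈ R, w {x} ≤ w {g})
    {F : Finset γ} (hgF : g ∉ F) (hF : ∀ x ∈ R, x ∉ F) :
    w ({x ∈ R.toFinset | c x = false} ∪ F) ≤ w (insert g ({x ∈ R.toFinset | c x} ∪ F)) := by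
  induction R using List.twoStepInduction generalizing g F with
  | nil => simpa using hm (subset_insert g F)
  | singleton p =>
    cases hp : c p
    · simpa [filter_singleton, hp] using hr F g p hgF (hF p (by simp)) (hg p (by simp))
    · simpa [filter_singleton, hp] using hm ((subset_insert p F).trans (subset_insert g _))
  | cons_cons p q R ih _ =>
    obtain ⟨hcpq, hc⟩ := hc.of_pairing_cons_cons hR
    simp only [List.nodup_cons, List.mem_cons, not_or] at hR hgR
    obtain ⟨⟨hpq, hpR⟩, hqR, hR⟩ := hR
    simp only [List.pairwise_cons, List.mem_cons, forall_eq_or_imp] at hsort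
    obtain ⟨⟨-, hpR'⟩, hqR', hsort⟩ := hsort
    simp only [List.mem_cons, forall_eq_or_imp] at hg hF
    cases hcp : c p
    · have hcq : c q = true := by simpa [hcp] using hcpq.symm
      have := hr.insert_union_le (ih hR hsort hc hqR hqR' (g := q) (F := insert p F)
        (by simp [hF.2.1, Ne.symm hpq])
        (fun z hz => by simp [hF.2.2 z hz, ne_of_mem_of_not_mem hz hpR]))
        (by simp [hpq, hF.1, hpR]) (by simp [hgR.2.1, hgF, hgR.2.2]) hg.1
      simpa [filter_insert, hcp, hcq, insert_comm] using this
    · have hcq : c q = false := by simpa [hcp] using hcpq.symm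
      have := hr.insert_union_le (ih hR hsort hc hpR hpR' (g := p) (F := insert q F)
        (by simp [hF.1, hpq])
        (fun z hz => by simp [hF.2.2 z hz, ne_of_mem_of_not_mem hz hqR]))
        (by simp [Ne.symm hpq, hF.2.1, hqR]) (by simp [hgR.1, hgF, hgR.2.2]) hg.2.1
      simpa [filter_insert, hcp, hcq] using this

theorem EF1.of_separates_pairing (hm : Monotonic w) (hr : Responsive w)
    {c : γ → Bool} {R : List γ} (hR : R.Nodup) (hsort : R.Pairwise fun a b => w {b} ≤ w {a})
    (hc : Separates c (pairing R)) :
    EF1 w {x ∈ R.toFinset | c x} {x ∈ R.toFinset | c x = false} := by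
  match R, hR, hsort, hc with
  | [], _, _, _ => exact EF1.of_le (by simp)
  | [p], _, _, _ =>
    cases hp : c p
    · exact ⟨{p}, by simp [hp], by simp, by simp [filter_singleton, hp]⟩
    · exact EF1.of_le (by simpa [filter_singleton, hp] using hm (empty_subset _))
  | p :: q :: R, hR, hsort, hc =>
    obtain ⟨hcpq, hc⟩ := hc.of_pairing_cons_cons hR
    simp only [List.nodup_cons, List.mem_cons, not_or] at hR
    obtain ⟨⟨-, hpR⟩, hqR, hR⟩ := hR
    simp only [List.pairwise_cons, List.mem_cons, forall_eq_or_imp] at hsort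
    obtain ⟨⟨-, hpR'⟩, hqR', hsort⟩ := hsort
    cases hcp : c p
    · have hcq : c q = true := by simpa [hcp] using hcpq.symm
      refine ⟨{p}, by simp [hcp], by simp, ?_⟩
      simpa [filter_insert, hcp, hcq, sdiff_singleton_eq_erase, erase_insert, hpR] using
        hr.le_insert_of_separates hm hR hsort hc hqR hqR' (notMem_empty q) (by simp)
    · have hcq : c q = false := by simpa [hcp] using hcpq.symm
      refine ⟨{q}, by simp [hcq], by simp, ?_⟩
      simpa [filter_insert, hcp, hcq, sdiff_singleton_eq_erase, erase_insert, hqR] using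
        hr.le_insert_of_separates hm hR hsort hc hpR hpR' (notMem_empty p) (by simp)

end Exchange

theorem abs_card_filter_sub_le {c : γ → Bool} {R : List γ} (hR : R.Nodup)
    (hc : Separates c (pairing R)) :
    |(#{x ∈ R.toFinset | c x} : ℤ) - #{x ∈ R.toFinset | c x = false}| ≤ 1 := by
  induction R using List.twoStepInduction with
  | nil => simp
  | singleton p => cases hp : c p <;> simp [filter_singleton, hp]
  | cons_cons p q R ih _ =>
    obtain ⟨hcpq, hc⟩ := hc.of_pairing_cons_cons hR
    simp only [List.nodup_cons, List.mem_cons, not_or] at hR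
    obtain ⟨⟨hpq, hpR⟩, hqR, hR⟩ := hR
    have := ih hR hc
    cases hcp : c p <;> cases hcq : c q <;> simp_all [filter_insert]

theorem responsive_2_1_balanced_EF1_general (γ : Type*) [Fintype γ] [DecidableEq γ]
    (u : Fin 2 → Finset γ → ℝ) (v : Finset γ → ℝ)
    (humono : ∀ j, Monotonic (u j)) (huresp : ∀ j, Responsive (u j)) :
    ∃ B₁ B₂ : Finset γ, Disjoint B₁ B₂ ∧ B₁ ∪ B₂ = Finset.univ ∧
      |(B₁.card : ℤ) - (B₂.card : ℤ)| ≤ 1 ∧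
      (∀ j, EF1 (u j) B₁ B₂) ∧ EF1 v B₂ B₁ := by
  choose R hR hmem hsort using fun j => exists_complete_list_pairwise_ge fun g => u j {g}
  obtain ⟨c, hc₀, hc₁⟩ :=
    exists_separates _ _ (involutive_pairing (hR 0)) (involutive_pairing (hR 1))
  have hc : ∀ j, Separates c (pairing (R j)) := by
    intro j; fin_cases j; exacts [hc₀, hc₁]
  have huniv : ∀ j, (R j).toFinset = univ := fun j =>
    eq_univ_of_forall fun x => List.mem_toFinset.2 (hmem j x)
  set X : Finset γ := {x | c x}
  set Y : Finset γ := {x | c x = false}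
  have hXY : ∀ j, EF1 (u j) X Y := fun j => by
    simpa [huniv] using EF1.of_separates_pairing (humono j) (huresp j) (hR j) (hsort j) (hc j)
  have hYX : ∀ j, EF1 (u j) Y X := fun j => by
    simpa [huniv] using EF1.of_separates_pairing (humono j) (huresp j) (hR j) (hsort j) (hc j).not
  have hbal : |(#X : ℤ) - #Y| ≤ 1 := by simpa [huniv] using abs_card_filter_sub_le (hR 0) (hc 0)
  have hdisj : Disjoint X Y := disjoint_filter.2 fun x _ h => by simp [h]
  have hunion : X ∪ Y = univ := by
    simpa using filter_union_filter_not_eq (p := fun x => c x = true) univ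
  rcases le_total (v X) (v Y) with h | h
  · exact ⟨X, Y, hdisj, hunion, hbal, hXY, EF1.of_le h⟩
  · exact ⟨Y, X, hdisj.symm, union_comm X Y ▸ hunion, abs_sub_comm (#X : ℤ) #Y ▸ hbal, hYX,
      EF1.of_le h⟩

/-- For groups of sizes (2,1) and responsive valuations, a balanced EF1 allocation
always exists. -/
theorem responsive_2_1_balanced_EF1 (γ : Type*) [Fintype γ] [DecidableEq γ]
    (u : Fin 2 → Finset γ → ℝ) (v : Finset γ → ℝ)
    (humono : ∀ j, Monotonic (u j)) (hunorm : ∀ j, Normalized (u j))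
    (huresp : ∀ j, Responsive (u j))
    (hvmono : Monotonic v) (hvnorm : Normalized v) (hvresp : Responsive v) :
    ∃ B₁ B₂ : Finset γ, Disjoint B₁ B₂ ∧ B₁ ∪ B₂ = Finset.univ ∧
      |(B₁.card : ℤ) - (B₂.card : ℤ)| ≤ 1 ∧
      (∀ j, EF1 (u j) B₁ B₂) ∧ EF1 v B₂ B₁ :=
  responsive_2_1_balanced_EF1_general γ u v humono huresp
end

section
/- Let t ≥ 2 be an integer and let χ denote the chromatic number of the generalized Kneser graph K(2t, t, 2). For any instance with two groups of agents containing at most χ − 1 agents in total, where all agents have monotonic, normalized valuations over a finite set G of goods with |G| ∈ {2t−1, 2t}, there exists an allocation (B₁, B₂) of G to the two groups with ||B₁| − |B₂|| ≤ 1 that is EF1 for every agent. -/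
open Finset

variable {γ : Type*} [DecidableEq γ]

/-- The generalized Kneser graph `K(b, r, s)`: vertices are the `r`-element subsets of a
`b`-element set, and two distinct vertices are adjacent iff the corresponding subsets
intersect in at most `s - 1` elements. -/
def kneserGraph (b r s : ℕ) : SimpleGraph {A : Finset (Fin b) // A.card = r} where
  Adj A B := A ≠ B ∧ ((A : Finset (Fin b)) ∩ (B : Finset (Fin b))).card ≤ s - 1
  symm := by
    constructor
    rintro A B ⟨h1, h2⟩
    exact ⟨h1.symm, by rwa [Finset.inter_comm]⟩
  loopless := by
    constructor
    rintro A ⟨h1, -⟩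
    exact h1 rfl

/-! Embed the goods into `Fin (2t)` by `f`. Every `t`-subset `A` of `Fin (2t)` induces the
balanced allocation `(f⁻¹ A, f⁻¹ Aᶜ)`. For Kneser-adjacent `A, A'` we have `|A ∩ A'| ≤ 1`, hence
also `|(A ∪ A')ᶜ| ≤ 1`, so group 1's bundles `f⁻¹ A, f⁻¹ A'` (and likewise group 2's, the
complements) together miss at most one good. If neither allocation were EF1 for a monotonic
group-1 agent, removing from `f⁻¹ Aᶜ` its at most one good outside `f⁻¹ A'`, and symmetrically,
would give `u (f⁻¹ A) < u (f⁻¹ A') < u (f⁻¹ A)`. Hence if every induced allocation failed for some agent,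
colouring `A` by such an agent would properly colour `K(2t, t, 2)` with `n₁ + n₂ < χ` colours. -/

section Valuation

variable [Fintype γ] {u : Finset γ → ℝ}

lemma lt_of_not_EF1_compl (hu : Monotonic u) {X Y : Finset γ} (hXY : #((X ∪ Y)ᶜ) ≤ 1)
    (hX : ¬ EF1 u X Xᶜ) : u X < u Y := by
  have hcard : #(Xᶜ \ Y) ≤ 1 :=
    (card_le_card fun x => by simp only [mem_sdiff, mem_compl, mem_union]; tauto).trans hXY
  calc u X < u (Xᶜ \ (Xᶜ \ Y)) := not_le.1 fun h => hX ⟨_, sdiff_subset, hcard, h⟩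
    _ ≤ u Y := hu fun x => by simp only [mem_sdiff, mem_compl]; tauto

lemma EF1_or_EF1_of_card_compl_union_le_one (hu : Monotonic u) {X Y : Finset γ}
    (hXY : #((X ∪ Y)ᶜ) ≤ 1) : EF1 u X Xᶜ ∨ EF1 u Y Yᶜ := by
  by_contra! h
  exact (lt_of_not_EF1_compl hu hXY h.1).asymm
    (lt_of_not_EF1_compl hu (union_comm X Y ▸ hXY) h.2)

lemma isIndepSet_setOf_not_EF1 (hu : Monotonic u) {V : Type*} {G : SimpleGraph V}
    (g : V → Finset γ) (hg : ∀ ⦃A B⦄, G.Adj A B → #((g A ∪ g B)ᶜ) ≤ 1) :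
    G.IsIndepSet {A | ¬ EF1 u (g A) (g A)ᶜ} :=
  fun _ hA _ hB _ hAB => (EF1_or_EF1_of_card_compl_union_le_one hu (hg hAB)).elim hA hB

end Valuation

lemma SimpleGraph.colorable_of_isIndepSet_cover {V ι : Type*} [Fintype ι] {G : SimpleGraph V}
    (s : ι → Set V) (hs : ∀ i, G.IsIndepSet (s i)) (hcover : ∀ v, ∃ i, v ∈ s i) :
    G.Colorable (Fintype.card ι) :=
  (Coloring.mk (fun v => (hcover v).choose) fun {v w} hvw heq =>
    hs _ (hcover v).choose_spec (heq ▸ (hcover w).choose_spec) hvw.ne hvw).colorable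

section Preimage

variable {α β : Type*} {f : α → β}

lemma card_preimage_le (hf : Function.Injective f) (s : Finset β) :
    #(s.preimage f hf.injOn) ≤ #s :=
  card_le_card_of_injOn f (fun _ hx => mem_preimage.1 hx) hf.injOn

variable [Fintype α] [Fintype β] [DecidableEq α] [DecidableEq β]

lemma card_compl_union_preimage_le (hf : Function.Injective f) (s t : Finset β) :
    #((s.preimage f hf.injOn ∪ t.preimage f hf.injOn)ᶜ) ≤ #((s ∪ t)ᶜ) := by
  rw [← preimage_union (s := s) (t := t) hf.injOn, ← preimage_compl _ hf]
  exact card_preimage_le hf _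

lemma abs_card_preimage_sub_card_compl_le_one (hf : Function.Injective f) {s : Finset β}
    (hs : 2 * #s = Fintype.card β) (hβ : Fintype.card β ≤ Fintype.card α + 1) :
    |(#(s.preimage f hf.injOn) : ℤ) - #(s.preimage f hf.injOn)ᶜ| ≤ 1 := by
  have h₁ := card_preimage_le hf s
  have h₂ := card_preimage_le hf sᶜ
  rw [preimage_compl _ hf, card_compl s] at h₂
  have h₃ := card_add_card_compl (s.preimage f hf.injOn)
  rw [abs_le]
  constructor <;> omega

end Preimage

lemma card_compl_union_le_of_kneserGraph_adj {r s : ℕ}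
    {A B : {A : Finset (Fin (2 * r)) // #A = r}}
    (h : (kneserGraph (2 * r) r s).Adj A B) : #((A.1 ∪ B.1)ᶜ) ≤ s - 1 := by
  have hunion := card_union_add_card_inter A.1 B.1
  have hinter : #(A.1 ∩ B.1) ≤ s - 1 := h.2
  have hA : #A.1 = r := A.2
  have hB : #B.1 = r := B.2
  rw [card_compl, Fintype.card_fin]
  omega

lemma card_compl_union_compl_le_of_kneserGraph_adj {b r s : ℕ}
    {A B : {A : Finset (Fin b) // #A = r}} (h : (kneserGraph b r s).Adj A B) :
    #((A.1ᶜ ∪ B.1ᶜ)ᶜ) ≤ s - 1 := by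
  rw [compl_union, compl_compl, compl_compl]
  exact h.2

lemma exists_EF1_preimage_of_not_colorable [Fintype γ] {t n₁ n₂ : ℕ}
    (hcol : ¬ (kneserGraph (2 * t) t 2).Colorable (n₁ + n₂)) (f : γ ↪ Fin (2 * t))
    {u : Fin n₁ → Finset γ → ℝ} {v : Fin n₂ → Finset γ → ℝ}
    (humono : ∀ j, Monotonic (u j)) (hvmono : ∀ j, Monotonic (v j)) :
    ∃ A : {A : Finset (Fin (2 * t)) // #A = t},
      (∀ j, EF1 (u j) (A.1.preimage f f.injective.injOn) (A.1.preimage f f.injective.injOn)ᶜ) ∧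
      ∀ j, EF1 (v j) (A.1.preimage f f.injective.injOn)ᶜ (A.1.preimage f f.injective.injOn) := by
  set G := kneserGraph (2 * t) t 2
  set alloc : {A : Finset (Fin (2 * t)) // #A = t} → Finset γ :=
    fun A => A.1.preimage f f.injective.injOn
  have hcover₁ ⦃A B⦄ (h : G.Adj A B) : #((alloc A ∪ alloc B)ᶜ) ≤ 1 :=
    (card_compl_union_preimage_le f.injective _ _).trans
      (card_compl_union_le_of_kneserGraph_adj h)
  have hcover₂ ⦃A B⦄ (h : G.Adj A B) : #(((alloc A)ᶜ ∪ (alloc B)ᶜ)ᶜ) ≤ 1 := by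
    simp only [alloc, ← preimage_compl _ f.injective]
    exact (card_compl_union_preimage_le f.injective _ _).trans
      (card_compl_union_compl_le_of_kneserGraph_adj h)
  by_contra! hnone
  let bad : Fin n₁ ⊕ Fin n₂ → Set {A : Finset (Fin (2 * t)) // #A = t} :=
    Sum.elim (fun j => {A | ¬ EF1 (u j) (alloc A) (alloc A)ᶜ})
      (fun j => {A | ¬ EF1 (v j) (alloc A)ᶜ (alloc A)ᶜᶜ})
  have hbad_indep : ∀ i, G.IsIndepSet (bad i) :=
    Sum.rec (fun j => isIndepSet_setOf_not_EF1 (humono j) _ hcover₁)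
      (fun j => isIndepSet_setOf_not_EF1 (hvmono j) _ hcover₂)
  have hbad_cover (A) : ∃ i, A ∈ bad i := by
    by_cases hu : ∀ j, EF1 (u j) (alloc A) (alloc A)ᶜ
    · obtain ⟨j, hj⟩ := hnone A hu
      exact ⟨.inr j, by simpa [bad] using hj⟩
    · obtain ⟨j, hj⟩ := not_forall.1 hu
      exact ⟨.inl j, hj⟩
  exact hcol (by simpa using G.colorable_of_isIndepSet_cover bad hbad_indep hbad_cover)

lemma nonempty_finset_fin_card_eq {b r : ℕ} (h : r ≤ b) : Nonempty {A : Finset (Fin b) // #A = r} :=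
  let ⟨A, _, hA⟩ := exists_subset_card_eq (s := (univ : Finset (Fin b))) (by simpa using h)
  ⟨⟨A, hA⟩⟩

theorem monotonic_EF1_of_chromatic_general (t : ℕ) (χ : ℕ)
    (hχ : (kneserGraph (2 * t) t 2).chromaticNumber = (χ : ℕ∞))
    (γ : Type*) [Fintype γ] [DecidableEq γ]
    (hcard : Fintype.card γ = 2 * t - 1 ∨ Fintype.card γ = 2 * t)
    (n₁ n₂ : ℕ) (hn : n₁ + n₂ ≤ χ - 1)
    (u : Fin n₁ → Finset γ → ℝ) (v : Fin n₂ → Finset γ → ℝ)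
    (humono : ∀ j, Monotonic (u j))
    (hvmono : ∀ j, Monotonic (v j)) :
    ∃ B₁ B₂ : Finset γ, Disjoint B₁ B₂ ∧ B₁ ∪ B₂ = Finset.univ ∧
      |(B₁.card : ℤ) - (B₂.card : ℤ)| ≤ 1 ∧
      (∀ j, EF1 (u j) B₁ B₂) ∧ (∀ j, EF1 (v j) B₂ B₁) := by
  have : Nonempty {A : Finset (Fin (2 * t)) // #A = t} := nonempty_finset_fin_card_eq (by omega)
  have hcol : ¬ (kneserGraph (2 * t) t 2).Colorable (n₁ + n₂) := fun hcol => by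
    have hle : (χ : ℕ∞) ≤ (n₁ + n₂ : ℕ) := hχ ▸ hcol.chromaticNumber_le
    have hpos : (0 : ℕ∞) < χ := hχ ▸ hcol.chromaticNumber_pos
    norm_cast at hle hpos
    omega
  obtain ⟨f⟩ : Nonempty (γ ↪ Fin (2 * t)) :=
    Function.Embedding.nonempty_of_card_le (by rw [Fintype.card_fin]; omega)
  obtain ⟨A, hu, hv⟩ := exists_EF1_preimage_of_not_colorable hcol f humono hvmono
  refine ⟨_, _, disjoint_compl_right, union_compl _, ?_, hu, hv⟩
  exact abs_card_preimage_sub_card_compl_le_one f.injective (by simp [A.2])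
    (by rw [Fintype.card_fin]; omega)

/-- Let χ be the chromatic number of the generalized Kneser graph K(2t, t, 2), t ≥ 2.
For two groups with at most χ - 1 agents in total, monotonic normalized valuations,
and 2t - 1 or 2t goods, a balanced EF1 allocation always exists. -/
theorem monotonic_EF1_of_chromatic (t : ℕ) (ht : 2 ≤ t) (χ : ℕ)
    (hχ : (kneserGraph (2 * t) t 2).chromaticNumber = (χ : ℕ∞))
    (γ : Type*) [Fintype γ] [DecidableEq γ]
    (hcard : Fintype.card γ = 2 * t - 1 ∨ Fintype.card γ = 2 * t)
    (n₁ n₂ : ℕ) (hn : n₁ + n₂ ≤ χ - 1)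
    (u : Fin n₁ → Finset γ → ℝ) (v : Fin n₂ → Finset γ → ℝ)
    (humono : ∀ j, Monotonic (u j)) (hunorm : ∀ j, Normalized (u j))
    (hvmono : ∀ j, Monotonic (v j)) (hvnorm : ∀ j, Normalized (v j)) :
    ∃ B₁ B₂ : Finset γ, Disjoint B₁ B₂ ∧ B₁ ∪ B₂ = Finset.univ ∧
      |(B₁.card : ℤ) - (B₂.card : ℤ)| ≤ 1 ∧
      (∀ j, EF1 (u j) B₁ B₂) ∧ (∀ j, EF1 (v j) B₂ B₁) :=
  monotonic_EF1_of_chromatic_general t χ hχ γ hcard n₁ n₂ hn u v humono hvmono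
end

section
/- There exists an instance with two groups of agents of sizes 5 and 1, where all six agents have binary valuations over a finite set G of goods, such that no allocation (B₁, B₂) of G with ||B₁| − |B₂|| ≤ 1 is EF1 for every agent. -/
open Finset

variable {γ : Type*} [DecidableEq γ]

/-- Auxiliary: the valuation counting goods in a fixed set `T` is binary. -/
lemma binary_count (T : Finset γ) : Binary (fun S => ((S ∩ T).card : ℝ)) := by
  constructor
  · intro S
    have : (S ∩ T).card = ∑ g ∈ S, ({g} ∩ T).card := by
      classical
      rw [← Finset.filter_mem_eq_inter, Finset.card_filter]
      refine Finset.sum_congr rfl fun g _ => ?_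
      by_cases hg : g ∈ T
      · simp [Finset.singleton_inter_of_mem hg, hg]
      · simp [Finset.singleton_inter_of_notMem hg, hg]
    simp only [this]
    push_cast
    rfl
  · intro g
    by_cases hg : g ∈ T
    · right; simp [Finset.singleton_inter_of_mem hg]
    · left; simp [Finset.singleton_inter_of_notMem hg]

/-- The counterexample valued sets for the five agents of group 1. -/
def A5 : Fin 5 → Finset (Fin 4)
  | 0 => {1, 2}
  | 1 => {0, 3}
  | 2 => {1, 3}
  | 3 => {0, 1}
  | 4 => {2, 3}

/-- The counterexample valued set for the single agent of group 2. -/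
def V1 : Finset (Fin 4) := {1, 3}

lemma key_s12 : ∀ B₁ : Finset (Fin 4),
    |(B₁.card : ℤ) - ((B₁ᶜ).card : ℤ)| ≤ 1 →
    ¬ ((∀ j, ∃ B ∈ (B₁ᶜ).powerset, B.card ≤ 1 ∧
          ((B₁ᶜ \ B) ∩ A5 j).card ≤ (B₁ ∩ A5 j).card) ∧
       ∃ B ∈ B₁.powerset, B.card ≤ 1 ∧
          ((B₁ \ B) ∩ V1).card ≤ ((B₁ᶜ) ∩ V1).card) := by
  decide

/-- For groups of sizes (5,1) and binary valuations, a balanced EF1 allocation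
does not always exist. -/
theorem binary_5_1_no_balanced_EF1 :
    ∃ (m : ℕ) (u : Fin 5 → Finset (Fin m) → ℝ) (v : Finset (Fin m) → ℝ),
      (∀ j, Binary (u j)) ∧ Binary v ∧
      ∀ B₁ B₂ : Finset (Fin m), Disjoint B₁ B₂ → B₁ ∪ B₂ = Finset.univ →
        |(B₁.card : ℤ) - (B₂.card : ℤ)| ≤ 1 →
        ¬ ((∀ j, EF1 (u j) B₁ B₂) ∧ EF1 v B₂ B₁) := by
  refine ⟨4, fun j S => ((S ∩ A5 j).card : ℝ), fun S => ((S ∩ V1).card : ℝ),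
    fun j => binary_count _, binary_count _, ?_⟩
  intro B₁ B₂ hdis hun hbal ⟨h1, h2⟩
  have hB₂ : B₂ = B₁ᶜ := by
    have := Finset.disjoint_left.mp hdis
    ext g
    simp only [Finset.mem_compl]
    constructor
    · intro hg hg'; exact this hg' hg
    · intro hg
      have : g ∈ B₁ ∪ B₂ := hun ▸ Finset.mem_univ g
      rcases Finset.mem_union.mp this with h | h
      · exact absurd h hg
      · exact h
  subst hB₂
  refine key_s12 B₁ hbal ⟨fun j => ?_, ?_⟩
  · obtain ⟨B, hB, hc, hle⟩ := h1 j
    exact ⟨B, Finset.mem_powerset.mpr hB, hc, by beta_reduce at hle; exact_mod_cast hle⟩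
  · obtain ⟨B, hB, hc, hle⟩ := h2
    exact ⟨B, Finset.mem_powerset.mpr hB, hc, by beta_reduce at hle; exact_mod_cast hle⟩
end

section
/- There exists an instance with two groups of agents of sizes 2 and 1, where all three agents have additive valuations over a finite set G of goods, such that no allocation (B₁, B₂) of G to the two groups is EFX for every agent. -/
/-!
Take four goods `0, 1, 2, 3`. The two agents of the first group value them `(2, 1, 1, 0)` and
`(1, 1, 1, 3)`, the single agent of the second group `(3, 1, 1, 3)`. If good `3` went to the
second group, the agent valuing it at `3` would force `B₂ = {3}`, and the single agent would envy
`{0, 1, 2}` even after dropping good `1`. So `3 ∈ B₁`, and the single agent forces `0 ∈ B₂`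
(else `B₁` minus its other good is worth at least `3 > v B₂`). Of the four remaining candidates
`B₁ = {3}, {1, 3}, {2, 3}` fail for the agent valuing `(2, 1, 1, 0)` and `B₁ = {1, 2, 3}` for the
single agent.
-/

open Finset

variable {γ : Type*} [DecidableEq γ]

/-- An allocation is EFX (envy-free up to any positively valued good) for an agent with
valuation `u` whose group receives `mine`, the other group receiving `other`. -/
def EFX (u : Finset γ → ℝ) (mine other : Finset γ) : Prop :=
  ∀ g ∈ other, 0 < u {g} → u (other \ {g}) ≤ u mine

variable {α : Type*}

def weightVal (w : α → ℕ) (S : Finset α) : ℝ := ∑ g ∈ S, (w g : ℝ)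

theorem additiveVal_weightVal (w : α → ℕ) : AdditiveVal (weightVal w) := by
  intro S
  simp [weightVal]

theorem weightVal_nonneg (w : α → ℕ) (S : Finset α) : 0 ≤ weightVal w S :=
  sum_nonneg fun g _ => Nat.cast_nonneg (w g)

theorem efx_weightVal_iff (w : γ → ℕ) (mine other : Finset γ) :
    EFX (weightVal w) mine other ↔
      ∀ g ∈ other, 0 < w g → ∑ x ∈ other \ {g}, w x ≤ ∑ x ∈ mine, w x := by
  simp only [EFX, weightVal, sum_singleton, Nat.cast_pos, ← Nat.cast_sum, Nat.cast_le]

instance (w : γ → ℕ) (mine other : Finset γ) : Decidable (EFX (weightVal w) mine other) :=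
  decidable_of_iff _ (efx_weightVal_iff w mine other).symm

def groupOneWeights : Fin 2 → Fin 4 → ℕ := ![![2, 1, 1, 0], ![1, 1, 1, 3]]

def groupTwoWeights : Fin 4 → ℕ := ![3, 1, 1, 3]

theorem groupWeights_not_efx : ∀ B : Finset (Fin 4),
    ¬ ((∀ j, EFX (weightVal (groupOneWeights j)) B Bᶜ) ∧ EFX (weightVal groupTwoWeights) Bᶜ B) := by
  decide

/-- For groups of sizes (2,1) and additive valuations, an EFX allocation
does not always exist. -/
theorem additive_2_1_no_EFX :
    ∃ (m : ℕ) (u : Fin 2 → Finset (Fin m) → ℝ) (v : Finset (Fin m) → ℝ),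
      (∀ j, AdditiveVal (u j)) ∧ AdditiveVal v ∧
      (∀ j S, 0 ≤ u j S) ∧ (∀ S, 0 ≤ v S) ∧
      ∀ B₁ B₂ : Finset (Fin m), Disjoint B₁ B₂ → B₁ ∪ B₂ = Finset.univ →
        ¬ ((∀ j, EFX (u j) B₁ B₂) ∧ EFX v B₂ B₁) := by
  refine ⟨4, fun j => weightVal (groupOneWeights j), weightVal groupTwoWeights,
    fun j => additiveVal_weightVal _, additiveVal_weightVal _,
    fun j => weightVal_nonneg _, weightVal_nonneg _, fun B₁ B₂ hdisj hunion => ?_⟩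
  obtain rfl : B₁ᶜ = B₂ := IsCompl.compl_eq ⟨hdisj, codisjoint_iff.mpr hunion⟩
  exact groupWeights_not_efx B₁
end

section
/- Let n be a positive integer, let there be n agents each with a monotonic, normalized valuation over a finite set G of goods, and let n₁, n₂ be nonnegative integers with n₁ + n₂ = n. Then there exist a partition of the n agents into two groups A₁ of size n₁ and A₂ of size n₂, and an allocation (B₁, B₂) of G to the two groups, such that the allocation is EF1 for every agent. -/
open Finset

variable {γ : Type*} [DecidableEq γ]

section Aux

variable {δ : Type*} [Fintype δ] [DecidableEq δ]

/-- The first `k` goods in the enumeration `e`. -/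
def prefSet {m : ℕ} (e : δ ≃ Fin m) (k : ℕ) : Finset δ :=
  Finset.univ.filter fun g => ((e g : Fin m) : ℕ) < k

lemma mem_prefSet {m : ℕ} (e : δ ≃ Fin m) {k : ℕ} {g : δ} :
    g ∈ prefSet e k ↔ ((e g : Fin m) : ℕ) < k := by
  simp [prefSet]

lemma prefSet_mono {m : ℕ} (e : δ ≃ Fin m) {k l : ℕ} (h : k ≤ l) :
    prefSet e k ⊆ prefSet e l := fun g hg => by
  rw [mem_prefSet] at *; omega

lemma prefSet_zero {m : ℕ} (e : δ ≃ Fin m) : prefSet e 0 = ∅ := by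
  ext g; simp [mem_prefSet]

lemma prefSet_top {m : ℕ} (e : δ ≃ Fin m) {k : ℕ} (h : m ≤ k) :
    prefSet e k = Finset.univ := by
  ext g; simp only [mem_prefSet, Finset.mem_univ, iff_true]
  exact lt_of_lt_of_le (e g).isLt h

/-- `happy1 e u k` : an agent with valuation `u` finds the allocation
`(prefSet e k, complement)` EF1 when put in the first group. -/
def happy1 {m : ℕ} (e : δ ≃ Fin m) (u : Finset δ → ℝ) (k : ℕ) : Prop :=
  EF1 u (prefSet e k) (Finset.univ \ prefSet e k)

/-- `happy2 e u k` : EF1 for an agent in the second group. -/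
def happy2 {m : ℕ} (e : δ ≃ Fin m) (u : Finset δ → ℝ) (k : ℕ) : Prop :=
  EF1 u (Finset.univ \ prefSet e k) (prefSet e k)

lemma happy1_top {m : ℕ} (e : δ ≃ Fin m) {u : Finset δ → ℝ}
    (hmono : Monotonic u) (hnorm : Normalized u) : happy1 e u m := by
  refine ⟨∅, Finset.empty_subset _, by simp, ?_⟩
  rw [prefSet_top e le_rfl]
  simp only [Finset.sdiff_self, Finset.sdiff_empty]
  rw [hnorm]
  calc (0:ℝ) = u ∅ := hnorm.symm
    _ ≤ u Finset.univ := hmono (Finset.empty_subset _)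

lemma happy2_zero {m : ℕ} (e : δ ≃ Fin m) {u : Finset δ → ℝ}
    (hmono : Monotonic u) (hnorm : Normalized u) : happy2 e u 0 := by
  refine ⟨∅, Finset.empty_subset _, by simp, ?_⟩
  rw [prefSet_zero]
  simp only [Finset.sdiff_empty, Finset.empty_sdiff]
  exact hmono (Finset.empty_subset _)

lemma happy1_succ {m : ℕ} (e : δ ≃ Fin m) {u : Finset δ → ℝ}
    (hmono : Monotonic u) {k : ℕ} (h : happy1 e u k) : happy1 e u (k + 1) := by
  obtain ⟨B, hBsub, hBcard, hBle⟩ := h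
  refine ⟨B ∩ (Finset.univ \ prefSet e (k + 1)), Finset.inter_subset_right, ?_, ?_⟩
  · exact le_trans (Finset.card_le_card Finset.inter_subset_left) hBcard
  · calc u ((Finset.univ \ prefSet e (k + 1)) \ (B ∩ (Finset.univ \ prefSet e (k + 1))))
        ≤ u ((Finset.univ \ prefSet e k) \ B) := by
          apply hmono
          intro x hx
          rw [Finset.mem_sdiff] at hx ⊢
          obtain ⟨hx1, hx2⟩ := hx
          refine ⟨?_, fun hxB => hx2 (Finset.mem_inter.mpr ⟨hxB, hx1⟩)⟩
          rw [Finset.mem_sdiff] at hx1 ⊢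
          exact ⟨hx1.1, fun hxp => hx1.2 (prefSet_mono e (Nat.le_succ k) hxp)⟩
      _ ≤ u (prefSet e k) := hBle
      _ ≤ u (prefSet e (k + 1)) := hmono (prefSet_mono e (Nat.le_succ k))

lemma happy1_of_le {m : ℕ} (e : δ ≃ Fin m) {u : Finset δ → ℝ}
    (hmono : Monotonic u) {k l : ℕ} (hkl : k ≤ l) (h : happy1 e u k) : happy1 e u l := by
  induction l, hkl using Nat.le_induction with
  | base => exact h
  | succ l hl ih => exact happy1_succ e hmono ih

lemma happy2_succ_of_not_happy1 {m : ℕ} (e : δ ≃ Fin m) {u : Finset δ → ℝ}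
    (hmono : Monotonic u) (hnorm : Normalized u) {k : ℕ}
    (h : ¬ happy1 e u k) : happy2 e u (k + 1) := by
  have hk : k < m := by
    by_contra hkm
    push_neg at hkm
    apply h
    refine ⟨∅, Finset.empty_subset _, by simp, ?_⟩
    rw [prefSet_top e hkm]
    simp only [Finset.sdiff_self, Finset.sdiff_empty]
    calc u ∅ = 0 := hnorm
      _ = u ∅ := hnorm.symm
      _ ≤ u Finset.univ := hmono (Finset.empty_subset _)
  set g : δ := e.symm ⟨k, hk⟩ with hg
  have heg : ((e g : Fin m) : ℕ) = k := by simp [hg]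
  have hgS : g ∈ Finset.univ \ prefSet e k := by
    simp [Finset.mem_sdiff, mem_prefSet, heg]
  have key : ¬ (u ((Finset.univ \ prefSet e k) \ {g}) ≤ u (prefSet e k)) := by
    intro hle
    exact h ⟨{g}, Finset.singleton_subset_iff.mpr hgS, by simp, hle⟩
  push_neg at key
  have hSdiff : (Finset.univ \ prefSet e k) \ {g} = Finset.univ \ prefSet e (k + 1) := by
    ext x
    simp only [Finset.mem_sdiff, Finset.mem_univ, true_and, mem_prefSet,
      Finset.mem_singleton]
    constructor
    · rintro ⟨hx1, hx2⟩
      have : ((e x : Fin m) : ℕ) ≠ k := by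
        intro hxk
        apply hx2
        rw [hg]
        exact e.injective (by rw [Equiv.apply_symm_apply]; exact Fin.ext hxk)
      omega
    · intro hx1
      refine ⟨by omega, fun hxg => ?_⟩
      rw [hxg] at hx1
      omega
  have hPdiff : prefSet e (k + 1) \ {g} = prefSet e k := by
    ext x
    simp only [Finset.mem_sdiff, mem_prefSet, Finset.mem_singleton]
    constructor
    · rintro ⟨hx1, hx2⟩
      have : ((e x : Fin m) : ℕ) ≠ k := by
        intro hxk
        apply hx2
        rw [hg]
        exact e.injective (by rw [Equiv.apply_symm_apply]; exact Fin.ext hxk)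
      omega
    · intro hx1
      refine ⟨by omega, fun hxg => ?_⟩
      rw [hxg] at hx1
      omega
  refine ⟨{g}, ?_, by simp, ?_⟩
  · rw [Finset.singleton_subset_iff, mem_prefSet]
    omega
  · rw [hPdiff, ← hSdiff]
    exact le_of_lt key

lemma happy2_of_le {m : ℕ} (e : δ ≃ Fin m) {u : Finset δ → ℝ}
    (hmono : Monotonic u) (hnorm : Normalized u) {k K : ℕ}
    (hK : ∀ l < K, ¬ happy1 e u l) (hkK : k ≤ K) : happy2 e u k := by
  cases k with
  | zero => exact happy2_zero e hmono hnorm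
  | succ k => exact happy2_succ_of_not_happy1 e hmono hnorm (hK k (by omega))

end Aux

/-- Variable groups: for n agents with monotonic valuations and any sizes n₁ + n₂ = n,
there is a partition of the agents into groups of sizes n₁ and n₂ together with an
EF1 allocation of the goods. -/
theorem variable_groups_EF1 (n : ℕ) (hn : 0 < n)
    (γ : Type*) [Fintype γ] [DecidableEq γ]
    (u : Fin n → Finset γ → ℝ)
    (hmono : ∀ j, Monotonic (u j)) (hnorm : ∀ j, Normalized (u j))
    (n₁ n₂ : ℕ) (hsum : n₁ + n₂ = n) :
    ∃ (A₁ A₂ : Finset (Fin n)) (B₁ B₂ : Finset γ),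
      Disjoint A₁ A₂ ∧ A₁ ∪ A₂ = Finset.univ ∧ A₁.card = n₁ ∧ A₂.card = n₂ ∧
      Disjoint B₁ B₂ ∧ B₁ ∪ B₂ = Finset.univ ∧
      (∀ j ∈ A₁, EF1 (u j) B₁ B₂) ∧ (∀ j ∈ A₂, EF1 (u j) B₂ B₁) := by
  classical
  set m := Fintype.card γ with hm
  set e : γ ≃ Fin m := Fintype.equivFin γ with he
  -- the threshold for each agent
  have hex : ∀ j : Fin n, ∃ k, happy1 e (u j) k := fun j =>
    ⟨m, happy1_top e (hmono j) (hnorm j)⟩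
  set K : Fin n → ℕ := fun j => Nat.find (hex j) with hK
  have hKhappy : ∀ j, happy1 e (u j) (K j) := fun j => Nat.find_spec (hex j)
  have hKmin : ∀ j, ∀ l < K j, ¬ happy1 e (u j) l := fun j l hl => Nat.find_min (hex j) hl
  -- sort the agents by K
  set σ : Equiv.Perm (Fin n) := Tuple.sort K with hσ
  have hσmono : Monotone (K ∘ σ) := Tuple.monotone_sort K
  have hn₁ : n₁ ≤ n := by omega
  set A₁ : Finset (Fin n) :=
    Finset.image (fun i : Fin n₁ => σ (Fin.castLE hn₁ i)) Finset.univ with hA₁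
  have hinj : Function.Injective (fun i : Fin n₁ => σ (Fin.castLE hn₁ i)) := by
    intro a b hab
    have := σ.injective hab
    exact Fin.castLE_injective hn₁ this
  have hA₁card : A₁.card = n₁ := by
    rw [hA₁, Finset.card_image_of_injective _ hinj, Finset.card_univ, Fintype.card_fin]
  set k : ℕ := A₁.sup K with hk
  refine ⟨A₁, A₁ᶜ, prefSet e k, Finset.univ \ prefSet e k, disjoint_compl_right,
    Finset.union_compl A₁, hA₁card, ?_, Finset.disjoint_sdiff,
    Finset.union_sdiff_of_subset (Finset.subset_univ _), ?_, ?_⟩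
  · rw [Finset.card_compl, hA₁card, Fintype.card_fin]; omega
  · -- agents in A₁ are happy with B₁
    intro j hj
    have hKj : K j ≤ k := Finset.le_sup hj
    exact happy1_of_le e (hmono j) hKj (hKhappy j)
  · -- agents in A₂ are happy with B₂
    intro j hj
    rw [Finset.mem_compl] at hj
    -- the index of j under the sort is at least n₁
    have hidx : n₁ ≤ ((σ.symm j : Fin n) : ℕ) := by
      by_contra hlt
      push_neg at hlt
      apply hj
      rw [hA₁, Finset.mem_image]
      refine ⟨⟨(σ.symm j : Fin n), hlt⟩, Finset.mem_univ _, ?_⟩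
      have : Fin.castLE hn₁ (⟨((σ.symm j : Fin n) : ℕ), hlt⟩ : Fin n₁) = σ.symm j :=
        Fin.ext rfl
      rw [this, Equiv.apply_symm_apply]
    have hkK : k ≤ K j := by
      rw [hk]
      apply Finset.sup_le
      intro j' hj'
      rw [hA₁, Finset.mem_image] at hj'
      obtain ⟨i, _, hi⟩ := hj'
      have hle : (Fin.castLE hn₁ i) ≤ σ.symm j := by
        rw [Fin.le_def]
        simp only [Fin.coe_castLE]
        omega
      have := hσmono hle
      simp only [Function.comp_apply, Equiv.apply_symm_apply] at this
      rw [← hi]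
      exact this
    exact happy2_of_le e (hmono j) (hnorm j) (hKmin j) hkK
end

section
/- Let n be a positive integer and let there be n agents each with a monotonic, normalized valuation over a finite set G of goods. Then there exist a partition of the n agents into two groups A₁ and A₂ with ||A₁| − |A₂|| ≤ 1, and an allocation (B₁, B₂) of G to the two groups with ||B₁| − |B₂|| ≤ 1, such that the allocation is EF1 for every agent. -/
open Finset

variable {γ : Type*} [DecidableEq γ]

/-- Variable groups: for n agents with monotonic valuations, there is a balanced partition
of the agents into two groups together with a balanced EF1 allocation of the goods. -/
theorem variable_groups_balanced_EF1 (n : ℕ) (hn : 0 < n)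
    (γ : Type*) [Fintype γ] [DecidableEq γ]
    (u : Fin n → Finset γ → ℝ)
    (hmono : ∀ j, Monotonic (u j)) (hnorm : ∀ j, Normalized (u j)) :
    ∃ (A₁ A₂ : Finset (Fin n)) (B₁ B₂ : Finset γ),
      Disjoint A₁ A₂ ∧ A₁ ∪ A₂ = Finset.univ ∧
      |(A₁.card : ℤ) - (A₂.card : ℤ)| ≤ 1 ∧
      Disjoint B₁ B₂ ∧ B₁ ∪ B₂ = Finset.univ ∧
      |(B₁.card : ℤ) - (B₂.card : ℤ)| ≤ 1 ∧
      (∀ j ∈ A₁, EF1 (u j) B₁ B₂) ∧ (∀ j ∈ A₂, EF1 (u j) B₂ B₁) := by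
  classical
  obtain ⟨m, hm⟩ : ∃ m, m = Fintype.card γ := ⟨_, rfl⟩
  set c : ℕ := (n + 1) / 2 with hc
  set h : ℕ := (m + 1) / 2 with hh
  set aC : Finset γ → ℕ :=
    fun L => ((Finset.univ : Finset (Fin n)).filter (fun j => ¬ EF1 (u j) L Lᶜ)).card
    with haC
  -- if an agent is not EF1 toward one side, it is EF1 toward the other
  have lemA : ∀ (j : Fin n) (X Y : Finset γ), ¬ EF1 (u j) X Y → EF1 (u j) Y X := by
    intro j X Y hne
    have h1 : ¬ u j Y ≤ u j X := fun hle =>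
      hne ⟨∅, empty_subset _, by simp, by simpa using hle⟩
    exact ⟨∅, empty_subset _, by simp, by simpa using (not_le.mp h1).le⟩
  -- both counts can't exceed c simultaneously
  have contra : ∀ L : Finset γ, c < aC L → c < aC Lᶜ → False := by
    intro L h1 h2
    simp only [haC] at h1 h2
    simp only [compl_compl] at h2
    have hdisj : Disjoint
        ((Finset.univ : Finset (Fin n)).filter (fun j => ¬ EF1 (u j) L Lᶜ))
        ((Finset.univ : Finset (Fin n)).filter (fun j => ¬ EF1 (u j) Lᶜ L)) := by
      rw [Finset.disjoint_left]
      intro j hj1 hj2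
      simp only [mem_filter] at hj1 hj2
      exact hj2.2 (lemA j L Lᶜ hj1.2)
    have hsum := (Finset.card_le_univ
      (((Finset.univ : Finset (Fin n)).filter (fun j => ¬ EF1 (u j) L Lᶜ)) ∪
       ((Finset.univ : Finset (Fin n)).filter (fun j => ¬ EF1 (u j) Lᶜ L))))
    rw [Finset.card_union_of_disjoint hdisj, Fintype.card_fin] at hsum
    omega
  -- safety of a single move
  have safe : ∀ (L L' B : Finset γ), B ⊆ L' → B ⊆ Lᶜ → B.card ≤ 1 →
      L' \ B ⊆ L → Lᶜ \ B ⊆ L'ᶜ →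
      ∀ j : Fin n, ¬ EF1 (u j) L Lᶜ → EF1 (u j) L'ᶜ L' := by
    intro L L' B hBL' hBLc hB1 hsub1 hsub2 j hj
    have h1 : ¬ u j (Lᶜ \ B) ≤ u j L := fun hle => hj ⟨B, hBLc, hB1, hle⟩
    exact ⟨B, hBL', hB1,
      le_trans (hmono j hsub1) (le_trans (not_le.mp h1).le (hmono j hsub2))⟩
  -- counting consequence of safety
  have safeCount : ∀ L L' : Finset γ, c < aC L →
      (∀ j : Fin n, ¬ EF1 (u j) L Lᶜ → EF1 (u j) L'ᶜ L') → aC L'ᶜ ≤ c := by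
    intro L L' hgL hsafe
    simp only [haC] at hgL ⊢
    simp only [compl_compl]
    have hdisj : Disjoint
        ((Finset.univ : Finset (Fin n)).filter (fun j => ¬ EF1 (u j) L Lᶜ))
        ((Finset.univ : Finset (Fin n)).filter (fun j => ¬ EF1 (u j) L'ᶜ L')) := by
      rw [Finset.disjoint_left]
      intro j hj1 hj2
      simp only [mem_filter] at hj1 hj2
      exact hj2.2 (hsafe j hj1.2)
    have hsum := (Finset.card_le_univ
      (((Finset.univ : Finset (Fin n)).filter (fun j => ¬ EF1 (u j) L Lᶜ)) ∪
       ((Finset.univ : Finset (Fin n)).filter (fun j => ¬ EF1 (u j) L'ᶜ L'))))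
    rw [Finset.card_union_of_disjoint hdisj, Fintype.card_fin] at hsum
    omega
  -- main induction: walk from a bad₁ partition towards a bad₂ partition
  have key : ∀ k (L Ls : Finset γ), (L \ Ls).card + (Ls \ L).card ≤ k →
      (L.card = h ∨ L.card = m - h) → (Ls.card = h ∨ Ls.card = m - h) →
      c < aC L → c < aC Lsᶜ →
      ∃ M : Finset γ, (M.card = h ∨ M.card = m - h) ∧ aC M ≤ c ∧ aC Mᶜ ≤ c := by
    intro k
    induction k with
    | zero =>
      intro L Ls hk hL hLs hgL hgLs
      have h1 : L \ Ls = ∅ := card_eq_zero.mp (by omega)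
      have h2 : Ls \ L = ∅ := card_eq_zero.mp (by omega)
      have hLL : L = Ls :=
        subset_antisymm (sdiff_eq_empty_iff_subset.mp h1) (sdiff_eq_empty_iff_subset.mp h2)
      subst hLL
      exact (contra L hgL hgLs).elim
    | succ k ih =>
      intro L Ls hk hL hLs hgL hgLs
      by_cases hEq : L = Ls
      · subst hEq
        exact (contra L hgL hgLs).elim
      · have tail : ∀ L' : Finset γ, (L'.card = h ∨ L'.card = m - h) →
            (L' \ Ls).card + (Ls \ L').card ≤ k →
            (∀ j : Fin n, ¬ EF1 (u j) L Lᶜ → EF1 (u j) L'ᶜ L') →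
            ∃ M : Finset γ, (M.card = h ∨ M.card = m - h) ∧ aC M ≤ c ∧ aC Mᶜ ≤ c := by
          intro L' hbal hmeas hsafe
          by_cases hg : c < aC L'
          · exact ih L' Ls hmeas hbal hLs hg hgLs
          · exact ⟨L', hbal, not_lt.mp hg, safeCount L L' hgL hsafe⟩
        by_cases hex : (L \ Ls).Nonempty
        · by_cases hex2 : (Ls \ L).Nonempty
          · -- swap move
            obtain ⟨p, hp⟩ := hex
            obtain ⟨q, hq⟩ := hex2
            have hpL : p ∈ L := (mem_sdiff.mp hp).1
            have hpLs : p ∉ Ls := (mem_sdiff.mp hp).2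
            have hqLs : q ∈ Ls := (mem_sdiff.mp hq).1
            have hqL : q ∉ L := (mem_sdiff.mp hq).2
            refine tail (insert q (L.erase p)) ?_ ?_ ?_
            · have hcL' : (insert q (L.erase p)).card = L.card := by
                rw [card_insert_of_notMem (by simp [hqL]), card_erase_of_mem hpL]
                have : 0 < L.card := card_pos.mpr ⟨p, hpL⟩
                omega
              rw [hcL']; exact hL
            · have m1 : insert q (L.erase p) \ Ls ⊆ (L \ Ls).erase p := by
                intro x hx
                simp only [mem_sdiff, mem_insert, mem_erase] at hx
                rcases hx with ⟨rfl | ⟨hxp, hxL⟩, hxLs⟩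
                · exact absurd hqLs hxLs
                · simp only [mem_erase, mem_sdiff]
                  exact ⟨hxp, hxL, hxLs⟩
              have m2 : Ls \ insert q (L.erase p) ⊆ (Ls \ L).erase q := by
                intro x hx
                simp only [mem_sdiff, mem_insert, mem_erase, not_or, not_and] at hx
                obtain ⟨hxLs, hxq, himp⟩ := hx
                by_cases hxp : x = p
                · subst hxp; exact absurd hxLs hpLs
                · simp only [mem_erase, mem_sdiff]
                  exact ⟨hxq, hxLs, himp hxp⟩
              have c1 := card_le_card m1
              have c2 := card_le_card m2
              rw [card_erase_of_mem hp] at c1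
              rw [card_erase_of_mem hq] at c2
              have d1 : 0 < (L \ Ls).card := card_pos.mpr ⟨p, hp⟩
              have d2 : 0 < (Ls \ L).card := card_pos.mpr ⟨q, hq⟩
              omega
            · refine safe L (insert q (L.erase p)) {q} ?_ ?_ (by simp) ?_ ?_
              · simp
              · simp [hqL]
              · intro x hx
                simp only [mem_sdiff, mem_insert, mem_erase, mem_singleton] at hx
                rcases hx with ⟨rfl | ⟨_, hxL⟩, hxq⟩
                · exact absurd rfl hxq
                · exact hxL
              · intro x hx
                simp only [mem_sdiff, mem_singleton, Finset.mem_compl] at hx ⊢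
                simp only [mem_insert, mem_erase, not_or, not_and]
                exact ⟨hx.2, fun _ => hx.1⟩
          · -- remove move : Ls ⊊ L
            obtain ⟨p, hp⟩ := hex
            have hpL : p ∈ L := (mem_sdiff.mp hp).1
            have hpLs : p ∉ Ls := (mem_sdiff.mp hp).2
            have hsub : Ls ⊆ L :=
              sdiff_eq_empty_iff_subset.mp (not_nonempty_iff_eq_empty.mp hex2)
            have hcard : Ls.card < L.card :=
              card_lt_card ⟨hsub, fun h' => hEq (subset_antisymm h' hsub)⟩
            refine tail (L.erase p) ?_ ?_ ?_
            · rw [card_erase_of_mem hpL]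
              omega
            · have m1 : L.erase p \ Ls ⊆ (L \ Ls).erase p := by
                intro x hx
                simp only [mem_sdiff, mem_erase] at hx
                simp only [mem_erase, mem_sdiff]
                exact ⟨hx.1.1, hx.1.2, hx.2⟩
              have m2 : Ls \ L.erase p = ∅ := by
                rw [eq_empty_iff_forall_notMem]
                intro x hx
                simp only [mem_sdiff, mem_erase, not_and] at hx
                by_cases hxp : x = p
                · subst hxp; exact hpLs hx.1
                · exact hx.2 hxp (hsub hx.1)
              have c1 := card_le_card m1
              rw [card_erase_of_mem hp] at c1
              have d1 : 0 < (L \ Ls).card := card_pos.mpr ⟨p, hp⟩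
              rw [m2]
              simp only [card_empty]
              omega
            · refine safe L (L.erase p) ∅ (empty_subset _) (empty_subset _) (by simp) ?_ ?_
              · rw [sdiff_empty]; exact erase_subset _ _
              · rw [sdiff_empty]
                intro x hx
                simp only [Finset.mem_compl] at hx ⊢
                simp only [mem_erase, not_and]
                exact fun _ => hx
        · -- add move : L ⊊ Ls
          have hsub : L ⊆ Ls :=
            sdiff_eq_empty_iff_subset.mp (not_nonempty_iff_eq_empty.mp hex)
          obtain ⟨q, hq⟩ : (Ls \ L).Nonempty := by
            rw [sdiff_nonempty]
            exact fun h' => hEq (subset_antisymm hsub h')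
          have hqLs : q ∈ Ls := (mem_sdiff.mp hq).1
          have hqL : q ∉ L := (mem_sdiff.mp hq).2
          have hcard : L.card < Ls.card :=
            card_lt_card ⟨hsub, fun h' => hEq (subset_antisymm hsub h')⟩
          refine tail (insert q L) ?_ ?_ ?_
          · rw [card_insert_of_notMem hqL]
            omega
          · have m1 : insert q L \ Ls = ∅ := by
              rw [eq_empty_iff_forall_notMem]
              intro x hx
              simp only [mem_sdiff, mem_insert] at hx
              rcases hx with ⟨rfl | hxL, hxLs⟩
              · exact hxLs hqLs
              · exact hxLs (hsub hxL)
            have m2 : Ls \ insert q L ⊆ (Ls \ L).erase q := by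
              intro x hx
              simp only [mem_sdiff, mem_insert, not_or] at hx
              simp only [mem_erase, mem_sdiff]
              exact ⟨hx.2.1, hx.1, hx.2.2⟩
            have c2 := card_le_card m2
            rw [card_erase_of_mem hq] at c2
            have d2 : 0 < (Ls \ L).card := card_pos.mpr ⟨q, hq⟩
            rw [m1]
            simp only [card_empty]
            omega
          · refine safe L (insert q L) {q} (by simp) (by simp [hqL]) (by simp) ?_ ?_
            · intro x hx
              simp only [mem_sdiff, mem_insert, mem_singleton] at hx
              rcases hx with ⟨rfl | hxL, hxq⟩
              · exact absurd rfl hxq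
              · exact hxL
            · intro x hx
              simp only [mem_sdiff, mem_singleton, Finset.mem_compl] at hx ⊢
              simp only [mem_insert, not_or]
              exact ⟨hx.2, hx.1⟩
  -- obtain a good balanced bundle M
  have hgood : ∃ M : Finset γ, (M.card = h ∨ M.card = m - h) ∧ aC M ≤ c ∧ aC Mᶜ ≤ c := by
    obtain ⟨L₀, _, hL₀⟩ := Finset.exists_subset_card_eq
      (show h ≤ (Finset.univ : Finset γ).card by rw [Finset.card_univ, ← hm]; omega)
    have hL₀c : L₀ᶜ.card = m - h := by rw [Finset.card_compl, hL₀, ← hm]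
    by_cases hg1 : c < aC L₀
    · exact key _ L₀ L₀ᶜ le_rfl (Or.inl hL₀) (Or.inr hL₀c) hg1 (by rwa [compl_compl])
    · by_cases hg2 : c < aC L₀ᶜ
      · exact key _ L₀ᶜ L₀ le_rfl (Or.inr hL₀c) (Or.inl hL₀) hg2 hg2
      · exact ⟨L₀, Or.inl hL₀, not_lt.mp hg1, not_lt.mp hg2⟩
  obtain ⟨M, hMbal, hMa, hMb⟩ := hgood
  -- agent sets
  set T1 : Finset (Fin n) :=
    (Finset.univ : Finset (Fin n)).filter (fun j => ¬ EF1 (u j) M Mᶜ) with hT1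
  set T2 : Finset (Fin n) :=
    (Finset.univ : Finset (Fin n)).filter (fun j => ¬ EF1 (u j) Mᶜ M) with hT2
  have hT1c : T1.card ≤ c := by simpa [haC] using hMa
  have hT2c : T2.card ≤ c := by
    simp only [haC] at hMb
    simp only [compl_compl] at hMb
    simpa [hT2] using hMb
  have hdisjT : Disjoint T1 T2 := by
    rw [Finset.disjoint_left]
    intro j hj1 hj2
    simp only [hT1, hT2, mem_filter] at hj1 hj2
    exact hj2.2 (lemA j M Mᶜ hj1.2)
  have hTsum : T1.card + T2.card ≤ n := by
    have hsum := Finset.card_le_univ (T1 ∪ T2)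
    rw [Finset.card_union_of_disjoint hdisjT, Fintype.card_fin] at hsum
    exact hsum
  set s1 : ℕ := max T2.card (n / 2) with hs1
  have hmx : s1 = T2.card ∨ s1 = n / 2 := max_choice _ _
  have hs1b : T2.card ≤ s1 := le_max_left _ _
  have hs1n : n / 2 ≤ s1 := le_max_right _ _
  have hfex : s1 - T2.card ≤ ((Finset.univ : Finset (Fin n)) \ (T1 ∪ T2)).card := by
    rw [card_sdiff_of_subset (subset_univ _), Finset.card_union_of_disjoint hdisjT,
      Finset.card_univ, Fintype.card_fin]
    rcases hmx with hmx | hmx <;> omega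
  obtain ⟨F, hFsub, hFcard⟩ := Finset.exists_subset_card_eq hfex
  have hdisjTF : Disjoint T2 F := by
    rw [Finset.disjoint_left]
    intro j hj1 hj2
    have := hFsub hj2
    rw [mem_sdiff, mem_union] at this
    exact this.2 (Or.inr hj1)
  have hA1card : (T2 ∪ F).card = s1 := by
    rw [Finset.card_union_of_disjoint hdisjTF, hFcard]
    omega
  have hA2card : ((Finset.univ : Finset (Fin n)) \ (T2 ∪ F)).card = n - s1 := by
    rw [card_sdiff_of_subset (subset_univ _), Finset.card_univ, Fintype.card_fin, hA1card]
  have hs1n' : s1 ≤ n := by rcases hmx with hmx | hmx <;> omega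
  refine ⟨T2 ∪ F, (Finset.univ : Finset (Fin n)) \ (T2 ∪ F), M, Mᶜ,
    Finset.disjoint_sdiff, Finset.union_sdiff_of_subset (subset_univ _), ?_, 
    disjoint_compl_right, Finset.union_compl M, ?_, ?_, ?_⟩
  · rw [hA1card, hA2card, abs_le]
    rcases hmx with hmx | hmx
    · constructor <;> [skip; skip] <;> omega
    · constructor <;> omega
  · have hMc : Mᶜ.card = m - M.card := by rw [Finset.card_compl, ← hm]
    have hMle : M.card ≤ m := by rw [hm]; exact card_le_univ M
    rw [hMc, abs_le]
    rcases hMbal with hb | hb <;> (constructor <;> omega)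
  · intro j hj
    rw [mem_union] at hj
    rcases hj with hj | hj
    · rw [hT2, mem_filter] at hj
      exact lemA j Mᶜ M hj.2
    · have hmem := hFsub hj
      rw [mem_sdiff, mem_union] at hmem
      by_contra hne
      exact hmem.2 (Or.inl (by rw [hT1, mem_filter]; exact ⟨mem_univ j, hne⟩))
  · intro j hj
    rw [mem_sdiff, mem_union] at hj
    by_contra hne
    exact hj.2 (Or.inl (by rw [hT2, mem_filter]; exact ⟨mem_univ j, hne⟩))
end

section
/- For any two individual agents with monotonic, normalized valuations u₁ and u₂ over a finite set G of goods, there exists an allocation (B₁, B₂) of G, with agent j receiving bundle B_j, such that ||B₁| − |B₂|| ≤ 1 and the allocation is EF1 for both agents, i.e., for each j ∈ {1,2} there exists B ⊆ B_{3−j} with |B| ≤ 1 and u_j(B_j) ≥ u_j(B_{3−j} \ B). -/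
open Finset

variable {γ : Type*} [DecidableEq γ]

namespace BalancedEF1Aux

/-- discrete crossing lemma: if `w (t+m) = -w t` then some `t` has `w t ≥ 0 ≥ w (t+1)`. -/
lemma seq_cross (m : ℕ) (w : ℕ → ℝ) (hw : ∀ t, w (t + m) = -w t) :
    ∃ t, 0 ≤ w t ∧ w (t + 1) ≤ 0 := by
  by_cases hpos : ∃ s, 0 < w s
  · obtain ⟨s, hs⟩ := hpos
    by_contra h
    push_neg at h
    have key : ∀ k, 0 < w (s + k) := by
      intro k
      induction k with
      | zero => simpa using hs
      | succ k ih =>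
        have := h (s + k) ih.le
        have e : s + k + 1 = s + (k + 1) := by ring
        rw [e] at this
        linarith
    have h1 := key m
    rw [hw] at h1
    linarith
  · push_neg at hpos
    have h0 : w (0 + m) = 0 := le_antisymm (hpos _) (by rw [hw]; linarith [hpos 0])
    refine ⟨m, ?_, hpos _⟩
    rw [show m = 0 + m by ring, h0]

/-- cyclic sequence lemma for odd period. -/
lemma seq_odd (m : ℕ) (v : ℕ → ℝ) (hper : ∀ t, v (t + (2 * m + 1)) = v t) :
    ∃ j, (v j ≤ v (j + 1) ∨ v (j + 2) ≤ v (j + 1)) ∧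
      (v (j + 3) ≤ v j ∨ v (j + 3) ≤ v (j + 2)) := by
  by_contra h
  push_neg at h
  by_cases hex : ∃ r, v r < v (r + 1)
  · obtain ⟨r, hr⟩ := hex
    have step : ∀ s, v s < v (s + 1) → v (s + 2) < v (s + 3) := by
      intro s hs
      exact (h s (Or.inl hs.le)).2
    have two : ∀ s, v s < v (s + 1) → ∀ k, v (s + 2 * k) < v (s + 2 * k + 1) := by
      intro s hs k
      induction k with
      | zero => simpa using hs
      | succ k ih =>
        have := step (s + 2 * k) ih
        have e1 : s + 2 * k + 2 = s + 2 * (k + 1) := by ring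
        have e2 : s + 2 * k + 3 = s + 2 * (k + 1) + 1 := by ring
        rw [e1, e2] at this
        exact this
    have step1 : ∀ s, v s < v (s + 1) → v (s + 1) < v (s + 2) := by
      intro s hs
      have h2 := two s hs (m + 1)
      have e1 : s + 2 * (m + 1) = (s + 1) + (2 * m + 1) := by ring
      rw [e1] at h2
      have e2 : s + 1 + (2 * m + 1) + 1 = (s + 2) + (2 * m + 1) := by ring
      rw [e2, hper, hper] at h2
      exact h2
    have all : ∀ k, v (r + k) < v (r + k + 1) := by
      intro k
      induction k with
      | zero => simpa using hr
      | succ k ih =>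
        have := step1 (r + k) ih
        have e1 : r + k + 1 = r + (k + 1) := by ring
        have e2 : r + k + 2 = r + (k + 1) + 1 := by ring
        rw [e1, e2] at this
        exact this
    have mono : ∀ k, v r < v (r + (k + 1)) := by
      intro k
      induction k with
      | zero => simpa using all 0
      | succ k ih =>
        have := all (k + 1)
        have e : r + (k + 1) + 1 = r + (k + 1 + 1) := by ring
        rw [e] at this
        exact ih.trans this
    have := mono (2 * m)
    rw [hper] at this
    exact lt_irrefl _ this
  · push_neg at hex
    have h2 : v 2 ≤ v 1 := by simpa using hex 1
    have h3 : v 3 ≤ v 2 := by simpa using hex 2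
    have := (h 0 (Or.inr h2)).2
    norm_num at this
    linarith

variable {γ : Type*} [DecidableEq γ]

/-- the arc of `k` consecutive items starting at position `t`. -/
def arc (g : ℕ → γ) (t k : ℕ) : Finset γ := (Finset.range k).image (fun i => g (t + i))

lemma arc_zero (g : ℕ → γ) (t : ℕ) : arc g t 0 = ∅ := by simp [arc]

lemma arc_last (g : ℕ → γ) (t k : ℕ) :
    arc g t (k + 1) = insert (g (t + k)) (arc g t k) := by
  simp [arc, Finset.range_add_one, Finset.image_insert]

lemma arc_head (g : ℕ → γ) (t k : ℕ) :
    arc g t (k + 1) = insert (g t) (arc g (t + 1) k) := by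
  ext x
  simp only [arc, Finset.mem_image, Finset.mem_range, Finset.mem_insert]
  constructor
  · rintro ⟨i, hi, rfl⟩
    cases i with
    | zero => left; simp
    | succ i => right; exact ⟨i, by omega, by rw [show t + 1 + i = t + (i + 1) by ring]⟩
  · rintro (rfl | ⟨i, hi, rfl⟩)
    · exact ⟨0, by omega, by simp⟩
    · exact ⟨i + 1, by omega, by rw [show t + (i + 1) = t + 1 + i by ring]⟩

lemma arc_union (g : ℕ → γ) (t a b : ℕ) :
    arc g t a ∪ arc g (t + a) b = arc g t (a + b) := by
  induction b with
  | zero => simp [arc_zero]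
  | succ b ih =>
    rw [show a + (b + 1) = (a + b) + 1 by ring, arc_last, arc_last, Finset.union_insert, ih,
      show t + (a + b) = t + a + b by ring]

lemma arc_subset_last (g : ℕ → γ) (t k : ℕ) : arc g t k ⊆ arc g t (k + 1) := by
  rw [arc_last]; exact Finset.subset_insert _ _

lemma arc_subset_head (g : ℕ → γ) (t k : ℕ) : arc g (t + 1) k ⊆ arc g t (k + 1) := by
  rw [arc_head]; exact Finset.subset_insert _ _

section N

variable {N : ℕ} {g : ℕ → γ}

/-- injectivity within one period -/
def GInj (N : ℕ) (g : ℕ → γ) : Prop := ∀ t i j, i < N → j < N → g (t + i) = g (t + j) → i = j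

lemma arc_card (hinj : GInj N g) (t : ℕ) {k : ℕ} (hk : k ≤ N) : (arc g t k).card = k := by
  rw [arc, Finset.card_image_of_injOn, Finset.card_range]
  intro i hi j hj heq
  simp only [Finset.mem_coe, Finset.mem_range] at hi hj
  exact hinj t i j (lt_of_lt_of_le hi hk) (lt_of_lt_of_le hj hk) heq

lemma notMem_arc_head (hinj : GInj N g) (t : ℕ) {k : ℕ} (hk : k + 1 ≤ N) :
    g t ∉ arc g (t + 1) k := by
  intro hmem
  simp only [arc, Finset.mem_image, Finset.mem_range] at hmem
  obtain ⟨i, hi, heq⟩ := hmem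
  have := hinj t (i + 1) 0 (by omega) (by omega)
    (by rw [show t + (i + 1) = t + 1 + i by ring, heq]; simp)
  omega

lemma notMem_arc_last (hinj : GInj N g) (t : ℕ) {k : ℕ} (hk : k + 1 ≤ N) :
    g (t + k) ∉ arc g t k := by
  intro hmem
  simp only [arc, Finset.mem_image, Finset.mem_range] at hmem
  obtain ⟨i, hi, heq⟩ := hmem
  have := hinj t i k (by omega) (by omega) heq
  omega

lemma arc_sdiff_head (hinj : GInj N g) (t : ℕ) {k : ℕ} (hk : k + 1 ≤ N) :
    arc g t (k + 1) \ {g t} = arc g (t + 1) k := by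
  rw [arc_head, Finset.sdiff_singleton_eq_erase, Finset.erase_insert (notMem_arc_head hinj t hk)]

lemma arc_sdiff_last (hinj : GInj N g) (t : ℕ) {k : ℕ} (hk : k + 1 ≤ N) :
    arc g t (k + 1) \ {g (t + k)} = arc g t k := by
  rw [arc_last, Finset.sdiff_singleton_eq_erase, Finset.erase_insert (notMem_arc_last hinj t hk)]

lemma arc_period (hper : ∀ t, g (t + N) = g t) (t k : ℕ) : arc g (t + N) k = arc g t k := by
  unfold arc
  congr 1
  ext i
  rw [show t + N + i = t + i + N by ring, hper]

lemma arc_period_mul (hper : ∀ t, g (t + N) = g t) (t k c : ℕ) :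
    arc g (t + c * N) k = arc g t k := by
  induction c with
  | zero => simp
  | succ c ih =>
    rw [show t + (c + 1) * N = (t + c * N) + N by ring, arc_period hper, ih]

end N

/-- Main key lemma: a single monotonic valuation admits a balanced split that is
EF1 from both sides. -/
lemma exists_double_EF1 (γ : Type*) [Fintype γ] [DecidableEq γ]
    (u : Finset γ → ℝ) (hmono : Monotonic u) (hn : 2 ≤ Fintype.card γ) :
    ∃ X Y : Finset γ, Disjoint X Y ∧ X ∪ Y = Finset.univ ∧
      (X.card = Y.card ∨ X.card + 1 = Y.card) ∧ EF1 u X Y ∧ EF1 u Y X := by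
  set N := Fintype.card γ with hNdef
  have hN : 0 < N := by omega
  set e := Fintype.equivFin γ with he
  set g : ℕ → γ := fun i => e.symm ⟨i % N, Nat.mod_lt _ hN⟩ with hg
  have hper : ∀ t, g (t + N) = g t := by
    intro t; simp [hg, Nat.add_mod_right]
  have hinj : GInj N g := by
    intro t i j hi hj heq
    have h1 : (t + i) % N = (t + j) % N := congrArg Fin.val (e.symm.injective heq)
    have h2 : i % N = j % N := Nat.ModEq.add_left_cancel' t h1
    rwa [Nat.mod_eq_of_lt hi, Nat.mod_eq_of_lt hj] at h2
  have huniv : ∀ t, arc g t N = Finset.univ := by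
    intro t
    apply Finset.eq_univ_of_card
    rw [arc_card hinj t le_rfl, hNdef]
  -- a helper producing the partition facts
  have hpart : ∀ t a b, a + b = N →
      Disjoint (arc g t a) (arc g (t + a) b) ∧ arc g t a ∪ arc g (t + a) b = Finset.univ := by
    intro t a b hab
    have hun : arc g t a ∪ arc g (t + a) b = Finset.univ := by
      rw [arc_union, hab, huniv]
    constructor
    · rw [Finset.disjoint_iff_inter_eq_empty, ← Finset.card_eq_zero]
      have hcu := Finset.card_union_add_card_inter (arc g t a) (arc g (t + a) b)
      rw [hun, Finset.card_univ, arc_card hinj t (by omega), arc_card hinj (t + a) (by omega)]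
        at hcu
      omega
    · exact hun
  rcases Nat.even_or_odd N with ⟨m, hm⟩ | ⟨m, hm⟩
  · -- even case, N = 2m
    have hm1 : 1 ≤ m := by omega
    obtain ⟨k, hk⟩ : ∃ k, m = k + 1 := ⟨m - 1, by omega⟩
    set w : ℕ → ℝ := fun t => u (arc g t m) - u (arc g (t + m) m) with hw
    have hwanti : ∀ t, w (t + m) = -w t := by
      intro t
      have : arc g (t + m + m) m = arc g t m := by
        rw [show t + m + m = t + N by omega, arc_period hper]
      simp only [hw, this]; ring
    obtain ⟨t, h1, h2⟩ := seq_cross m w hwanti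
    have h1' : u (arc g (t + m) m) ≤ u (arc g t m) := by
      simp only [hw] at h1; linarith
    have h2' : u (arc g (t + 1) m) ≤ u (arc g (t + 1 + m) m) := by
      simp only [hw] at h2; linarith
    by_cases hE : u (arc g (t + 1) k) ≤ u (arc g (t + m) m)
    · refine ⟨arc g t m, arc g (t + m) m, (hpart t m m (by omega)).1,
        (hpart t m m (by omega)).2, Or.inl (by rw [arc_card hinj _ (by omega),
          arc_card hinj _ (by omega)]), ?_, ?_⟩
      · exact ⟨∅, Finset.empty_subset _, by simp, by rw [Finset.sdiff_empty]; exact h1'⟩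
      · refine ⟨{g t}, ?_, by simp, ?_⟩
        · rw [Finset.singleton_subset_iff, hk, arc_head]
          exact Finset.mem_insert_self _ _
        · rw [hk, arc_sdiff_head hinj t (by omega), ← hk]
          exact hE
    · push_neg at hE
      have hF : u (arc g (t + m + 1) k) ≤ u (arc g (t + m) m) := by
        apply hmono
        rw [hk]
        exact arc_subset_head g (t + (k + 1)) k
      have hEsub : u (arc g (t + 1) k) ≤ u (arc g (t + 1) m) := by
        apply hmono
        rw [hk]
        exact arc_subset_last g (t + 1) k
      refine ⟨arc g (t + 1) m, arc g (t + 1 + m) m, (hpart (t + 1) m m (by omega)).1,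
        (hpart (t + 1) m m (by omega)).2, Or.inl (by rw [arc_card hinj _ (by omega),
          arc_card hinj _ (by omega)]), ?_, ?_⟩
      · -- EF1 for the (t+1)-side: remove g t from the other side
        have hYeq : arc g (t + 1 + m) m \ {g t} = arc g (t + 1 + m) k := by
          have := arc_sdiff_last hinj (t + 1 + m) (k := k) (by omega)
          rw [← hk] at this
          rwa [show g (t + 1 + m + k) = g t by
            rw [show t + 1 + m + k = t + N by omega, hper]] at this
        refine ⟨{g t}, ?_, by simp, ?_⟩
        · rw [Finset.singleton_subset_iff, hk, arc_last,
            show g (t + 1 + (k + 1) + k) = g t by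
              rw [show t + 1 + (k + 1) + k = t + N by omega, hper]]
          exact Finset.mem_insert_self _ _
        · rw [hYeq]
          calc u (arc g (t + 1 + m) k) ≤ u (arc g (t + m) m) := by
                rw [show t + 1 + m = t + m + 1 by omega]; exact hF
            _ ≤ u (arc g (t + 1) k) := hE.le
            _ ≤ u (arc g (t + 1) m) := hEsub
      · exact ⟨∅, Finset.empty_subset _, by simp, by rw [Finset.sdiff_empty]; exact h2'⟩
  · -- odd case, N = 2m+1
    have hm1 : 1 ≤ m := by omega
    obtain ⟨k, hk⟩ : ∃ k, m = k + 1 := ⟨m - 1, by omega⟩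
    set v : ℕ → ℝ := fun j => u (arc g (j * (m + 1)) m) with hv
    have hperv : ∀ j, v (j + (2 * m + 1)) = v j := by
      intro j
      simp only [hv]
      rw [show (j + (2 * m + 1)) * (m + 1) = j * (m + 1) + (m + 1) * N by rw [hm]; ring,
        show j * (m + 1) + (m + 1) * N = j * (m + 1) + (m + 1) * N from rfl]
      rw [arc_period_mul hper]
    obtain ⟨j, hc1, hc2⟩ := seq_odd m v hperv
    set t := (j + 1) * (m + 1) with ht
    have ej : arc g (j * (m + 1)) m = arc g (t + m) m := by
      rw [show t + m = j * (m + 1) + N by rw [ht, hm]; ring, arc_period hper]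
    have ej2 : arc g ((j + 2) * (m + 1)) m = arc g (t + m + 1) m := by
      rw [show (j + 2) * (m + 1) = t + m + 1 by rw [ht]; ring]
    have ej3 : arc g ((j + 3) * (m + 1)) m = arc g (t + 1) m := by
      rw [show (j + 3) * (m + 1) = (t + 1) + N by rw [ht, hm]; ring, arc_period hper]
    simp only [hv, ej, ej2, ej3, show (j + 1) * (m + 1) = t from rfl] at hc1 hc2
    refine ⟨arc g t m, arc g (t + m) (m + 1), (hpart t m (m + 1) (by omega)).1,
      (hpart t m (m + 1) (by omega)).2, Or.inr (by rw [arc_card hinj _ (by omega),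
        arc_card hinj _ (by omega)]), ?_, ?_⟩
    · -- EF1 for the small side
      rcases hc1 with hc1 | hc1
      · refine ⟨{g (t + m + m)}, ?_, by simp, ?_⟩
        · rw [Finset.singleton_subset_iff, arc_last]
          exact Finset.mem_insert_self _ _
        · rw [arc_sdiff_last hinj (t + m) (by omega)]
          exact hc1
      · refine ⟨{g (t + m)}, ?_, by simp, ?_⟩
        · rw [Finset.singleton_subset_iff, arc_head]
          exact Finset.mem_insert_self _ _
        · rw [arc_sdiff_head hinj (t + m) (by omega)]
          exact hc1
    · -- EF1 for the big side: remove g t from the small side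
      refine ⟨{g t}, ?_, by simp, ?_⟩
      · rw [Finset.singleton_subset_iff, hk, arc_head]
        exact Finset.mem_insert_self _ _
      · rw [hk, arc_sdiff_head hinj t (by omega), ← hk]
        have hstep : u (arc g (t + 1) k) ≤ u (arc g (t + 1) m) := by
          apply hmono; rw [hk]; exact arc_subset_last g (t + 1) k
        rcases hc2 with hc2 | hc2
        · calc u (arc g (t + 1) k) ≤ u (arc g (t + 1) m) := hstep
            _ ≤ u (arc g (t + m) m) := hc2
            _ ≤ u (arc g (t + m) (m + 1)) := hmono (arc_subset_last g (t + m) m)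
        · calc u (arc g (t + 1) k) ≤ u (arc g (t + 1) m) := hstep
            _ ≤ u (arc g (t + m + 1) m) := hc2
            _ ≤ u (arc g (t + m) (m + 1)) := hmono (arc_subset_head g (t + m) m)

end BalancedEF1Aux

/-- For two individual agents with monotonic valuations, a balanced EF1 allocation
always exists. -/
theorem two_agents_balanced_EF1 (γ : Type*) [Fintype γ] [DecidableEq γ]
    (u₁ u₂ : Finset γ → ℝ)
    (h₁mono : Monotonic u₁) (h₁norm : Normalized u₁)
    (h₂mono : Monotonic u₂) (h₂norm : Normalized u₂) :
    ∃ B₁ B₂ : Finset γ, Disjoint B₁ B₂ ∧ B₁ ∪ B₂ = Finset.univ ∧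
      |(B₁.card : ℤ) - (B₂.card : ℤ)| ≤ 1 ∧
      EF1 u₁ B₁ B₂ ∧ EF1 u₂ B₂ B₁ := by
  by_cases hn : 2 ≤ Fintype.card γ
  · obtain ⟨X, Y, hdisj, hunion, hcards, hXY, hYX⟩ :=
      BalancedEF1Aux.exists_double_EF1 γ u₁ h₁mono hn
    by_cases hside : u₂ X ≤ u₂ Y
    · refine ⟨X, Y, hdisj, hunion, ?_, hXY, ?_⟩
      · rcases hcards with h | h <;> simp [h, abs_le] <;> omega
      · exact ⟨∅, Finset.empty_subset _, by simp, by rw [Finset.sdiff_empty]; exact hside⟩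
    · refine ⟨Y, X, hdisj.symm, by rw [Finset.union_comm]; exact hunion, ?_, hYX, ?_⟩
      · rcases hcards with h | h <;> simp [h, abs_le] <;> omega
      · exact ⟨∅, Finset.empty_subset _, by simp,
          by rw [Finset.sdiff_empty]; exact (not_le.mp hside).le⟩
  · -- at most one good
    refine ⟨Finset.univ, ∅, Finset.disjoint_empty_right _, by simp, ?_, ?_, ?_⟩
    · rw [Finset.card_univ, Finset.card_empty]
      rw [abs_le]
      constructor <;> omega
    · exact ⟨∅, Finset.empty_subset _, by simp,
        by rw [Finset.sdiff_empty]; exact h₁mono (Finset.empty_subset _)⟩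
    · refine ⟨Finset.univ, Finset.Subset.refl _, by rw [Finset.card_univ]; omega, ?_⟩
      rw [Finset.sdiff_self]
  done
end

section
/- There exist a finite set G of goods and a finite set of agents with additive valuations over G such that there is no partition of the agents into two groups whose sizes differ by at most one together with an allocation (B₁, B₂) of G to the two groups that is EFX for every agent. (An explicit instance has six agents and three goods.) -/
open Finset

variable {γ : Type*} [DecidableEq γ]

/-!
The instance: agent `j` values its favourite good `j % 3` at 3 and the two other goods at 1.
With three goods one of the two bundles has at most one good. An agent who receives such a
bundle `B` while the other bundle contains her favourite good together with a second good
envies the other group even after removing that second good (3 > 1); so `B` is exactly her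
favourite good. Hence every agent of that group has the same favourite good, but only two
agents share a favourite, whereas a balanced partition of six agents puts three in each group.
-/

theorem AdditiveVal.mono {α : Type*} {u : Finset α → ℝ} (hu : AdditiveVal u)
    (hnonneg : ∀ g, 0 ≤ u {g}) {S T : Finset α} (hST : S ⊆ T) : u S ≤ u T := by
  rw [hu S, hu T]
  exact sum_le_sum_of_subset_of_nonneg hST fun g _ _ => hnonneg g

theorem EFX.singleton_le {u : Finset γ → ℝ} {mine other : Finset γ} (h : EFX u mine other)
    (hu : AdditiveVal u) (hnonneg : ∀ g, 0 ≤ u {g}) {g k : γ} (hg : g ∈ other) (hk : k ∈ other)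
    (hgk : g ≠ k) (hpos : 0 < u {g}) : u {k} ≤ u mine :=
  (hu.mono hnonneg (by simp [hk, hgk.symm])).trans (h g hg hpos)

def favourite (j : Fin 6) : Fin 3 := Fin.ofNat 3 j

def favouriteVal (j : Fin 6) (S : Finset (Fin 3)) : ℝ :=
  ∑ g ∈ S, if g = favourite j then 3 else 1

theorem additiveVal_favouriteVal (j : Fin 6) : AdditiveVal (favouriteVal j) := by
  intro S
  simp only [favouriteVal, sum_singleton]

theorem favouriteVal_singleton_pos (j : Fin 6) (g : Fin 3) : 0 < favouriteVal j {g} := by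
  unfold favouriteVal
  positivity

theorem favouriteVal_nonneg (j : Fin 6) (S : Finset (Fin 3)) : 0 ≤ favouriteVal j S := by
  unfold favouriteVal
  positivity

theorem favouriteVal_of_notMem {j : Fin 6} {S : Finset (Fin 3)} (h : favourite j ∉ S) :
    favouriteVal j S = S.card := by
  rw [favouriteVal, sum_congr rfl fun g hg => if_neg (ne_of_mem_of_not_mem hg h)]
  simp

theorem card_filter_favourite_eq (a : Fin 3) : #{j | favourite j = a} = 2 := by
  revert a
  decide

theorem eq_singleton_favourite_of_EFX {j : Fin 6} {B B' : Finset (Fin 3)} (hB : #B ≤ 1)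
    (hB' : 2 ≤ #B') (hcover : B ∪ B' = univ) (h : EFX (favouriteVal j) B B') :
    B = {favourite j} := by
  have hmem : favourite j ∈ B := by
    by_contra hnot
    have hfav : favourite j ∈ B' :=
      (mem_union.mp (hcover ▸ mem_univ (favourite j))).resolve_left hnot
    obtain ⟨g, hg, hne⟩ := exists_mem_ne (by omega : 1 < #B') (favourite j)
    have hle := h.singleton_le (additiveVal_favouriteVal j)
      (fun g => (favouriteVal_singleton_pos j g).le) hg hfav hne (favouriteVal_singleton_pos j g)
    have hval : favouriteVal j B ≤ 1 := by
      rw [favouriteVal_of_notMem hnot]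
      exact_mod_cast hB
    rw [show favouriteVal j {favourite j} = 3 by simp [favouriteVal]] at hle
    linarith
  exact eq_singleton_iff_unique_mem.mpr ⟨hmem, fun g hg => card_le_one.mp hB g hg _ hmem⟩

theorem not_forall_EFX_of_card_le_one {A : Finset (Fin 6)} {B B' : Finset (Fin 3)}
    (hA : 3 ≤ #A) (hB : #B ≤ 1) (hB' : 2 ≤ #B') (hcover : B ∪ B' = univ) :
    ¬ ∀ j ∈ A, EFX (favouriteVal j) B B' := by
  intro h
  obtain ⟨j₀, hj₀⟩ : A.Nonempty := card_pos.mp (by omega)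
  have hsub : A ⊆ ({j | favourite j = favourite j₀} : Finset (Fin 6)) := fun j hj => by
    have := (eq_singleton_favourite_of_EFX hB hB' hcover (h j hj)).symm.trans
      (eq_singleton_favourite_of_EFX hB hB' hcover (h j₀ hj₀))
    simpa using this
  have := card_le_card hsub
  rw [card_filter_favourite_eq] at this
  omega

/-- There is an instance (six agents, three goods, additive valuations) such that no
balanced partition of the agents into two groups admits an EFX allocation. -/
theorem no_balanced_partition_EFX :
    ∃ (m n : ℕ) (u : Fin n → Finset (Fin m) → ℝ),
      (∀ j, AdditiveVal (u j)) ∧ (∀ j S, 0 ≤ u j S) ∧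
      ∀ A₁ A₂ : Finset (Fin n), Disjoint A₁ A₂ → A₁ ∪ A₂ = Finset.univ →
        |(A₁.card : ℤ) - (A₂.card : ℤ)| ≤ 1 →
        ∀ B₁ B₂ : Finset (Fin m), Disjoint B₁ B₂ → B₁ ∪ B₂ = Finset.univ →
          ¬ ((∀ j ∈ A₁, EFX (u j) B₁ B₂) ∧ (∀ j ∈ A₂, EFX (u j) B₂ B₁)) := by
  refine ⟨3, 6, favouriteVal, additiveVal_favouriteVal, favouriteVal_nonneg, ?_⟩
  intro A₁ A₂ hA hAcover hbalanced B₁ B₂ hB hBcover ⟨h₁, h₂⟩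
  have hAcard : #A₁ + #A₂ = 6 := by simpa [hAcover] using (card_union_of_disjoint hA).symm
  have hBcard : #B₁ + #B₂ = 3 := by simpa [hBcover] using (card_union_of_disjoint hB).symm
  rw [abs_le] at hbalanced
  rcases le_or_gt #B₁ 1 with hB₁ | hB₁
  · exact not_forall_EFX_of_card_le_one (by omega) hB₁ (by omega) hBcover h₁
  · exact not_forall_EFX_of_card_le_one (by omega) (by omega) (by omega)
      (union_comm B₁ B₂ ▸ hBcover) h₂
end

section
/- Let n and k be positive integers, let there be n agents a₁, …, a_n each with an additive valuation u_j over a finite set G of goods, and let n₁, …, n_k be nonnegative integers with n₁ + ⋯ + n_k = n. Then there exist a partition of the agents into k groups such that group i contains exactly n_i agents, and an allocation of G into k pairwise disjoint bundles B₁, …, B_k with B₁ ∪ ⋯ ∪ B_k = G, such that every agent a_j in group i satisfies u_j(B_i) ≥ (1/k)·u_j(G) − ((k−1)/k)·max_{g∈G} u_j({g}). -/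
open Finset

variable {γ : Type*} [DecidableEq γ]

section Aux

variable {γ : Type*} [DecidableEq γ]

lemma addval_empty (u : Finset γ → ℝ) (h : AdditiveVal u) : u ∅ = 0 := by
  simpa using h ∅

lemma addval_sdiff (u : Finset γ → ℝ) (h : AdditiveVal u) {B S : Finset γ} (hBS : B ⊆ S) :
    u (S \ B) = u S - u B := by
  rw [h (S \ B), h S, h B, ← Finset.sum_sdiff hBS]; ring

lemma addval_erase (u : Finset γ → ℝ) (h : AdditiveVal u) {B : Finset γ} {g : γ} (hg : g ∈ B) :
    u B = u (B.erase g) + u {g} := by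
  rw [h B, h (B.erase g)]
  exact (Finset.sum_erase_add _ _ hg).symm

/-- Bag extraction: from a goods set `S` that satisfies every agent in `A`, we can extract a
bundle `B ⊆ S` and `m` agents `A' ⊆ A` all satisfied by `B`, such that every other agent values
`B` at most `t j + M j`. -/
lemma bag_lemma {ι : Type*} [DecidableEq ι] (u : ι → Finset γ → ℝ)
    (hadd : ∀ j, AdditiveVal (u j)) (hnn : ∀ j S, 0 ≤ u j S)
    (t M : ι → ℝ) (hM : ∀ j g, u j {g} ≤ M j) (htM : ∀ j, 0 ≤ t j + M j)
    (A : Finset ι) (S : Finset γ) (m : ℕ) (hm : m ≤ A.card)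
    (hsat : ∀ j ∈ A, t j ≤ u j S) :
    ∃ (B : Finset γ) (A' : Finset ι), B ⊆ S ∧ A' ⊆ A ∧ A'.card = m ∧
      (∀ j ∈ A', t j ≤ u j B) ∧ (∀ j ∈ A, j ∉ A' → u j B ≤ t j + M j) := by
  classical
  set F := S.powerset.filter (fun B => m ≤ (A.filter fun j => t j ≤ u j B).card) with hF
  have hSF : S ∈ F := by
    rw [hF, Finset.mem_filter, Finset.mem_powerset]
    refine ⟨Finset.Subset.refl S, ?_⟩
    have : A.filter (fun j => t j ≤ u j S) = A := Finset.filter_true_of_mem hsat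
    rw [this]; exact hm
  obtain ⟨B, hBF, hmin⟩ := Finset.exists_min_image F Finset.card ⟨S, hSF⟩
  rw [hF, Finset.mem_filter, Finset.mem_powerset] at hBF
  obtain ⟨hBS, hcard⟩ := hBF
  rcases B.eq_empty_or_nonempty with rfl | ⟨g, hg⟩
  · obtain ⟨A', hA'sub, hA'card⟩ :=
      Finset.exists_subset_card_eq (s := A.filter fun j => t j ≤ u j (∅ : Finset γ)) (n := m) hcard
    refine ⟨∅, A', Finset.empty_subset _, hA'sub.trans (Finset.filter_subset _ _), hA'card,
      fun j hj => (Finset.mem_filter.mp (hA'sub hj)).2, fun j hj _ => ?_⟩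
    rw [addval_empty (u j) (hadd j)]
    exact htM j
  · -- B nonempty, minimal; erasing g breaks the property
    have herase : ¬ (m ≤ (A.filter fun j => t j ≤ u j (B.erase g)).card) := by
      intro hcon
      have hmem : B.erase g ∈ F := by
        rw [hF, Finset.mem_filter, Finset.mem_powerset]
        exact ⟨(Finset.erase_subset g B).trans hBS, hcon⟩
      have := hmin _ hmem
      have hlt : (B.erase g).card < B.card := Finset.card_erase_lt_of_mem hg
      omega
    push_neg at herase
    have hsub : (A.filter fun j => t j ≤ u j (B.erase g)) ⊆ (A.filter fun j => t j ≤ u j B) := by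
      intro j hj
      rw [Finset.mem_filter] at hj ⊢
      refine ⟨hj.1, le_trans hj.2 ?_⟩
      rw [addval_erase (u j) (hadd j) hg]
      have := hnn j {g}
      linarith
    obtain ⟨A', hA'1, hA'2, hA'card⟩ := Finset.exists_subsuperset_card_eq
      (n := m - (A.filter fun j => t j ≤ u j (B.erase g)).card + (A.filter fun j => t j ≤ u j (B.erase g)).card)
      hsub (by omega) (by omega)
    have hA'm : A'.card = m := by rw [hA'card]; omega
    refine ⟨B, A', hBS, hA'2.trans (Finset.filter_subset _ _), hA'm,
      fun j hj => (Finset.mem_filter.mp (hA'2 hj)).2, fun j hjA hjA' => ?_⟩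
    have hj' : j ∉ (A.filter fun j => t j ≤ u j (B.erase g)) := fun h => hjA' (hA'1 h)
    rw [Finset.mem_filter] at hj'
    push_neg at hj'
    have h1 : u j (B.erase g) < t j := hj' hjA
    rw [addval_erase (u j) (hadd j) hg]
    have := hM j g
    linarith

lemma biUnion_cons {m : ℕ} {α : Type*} [DecidableEq α] (s : Finset α) (f : Fin m → Finset α) :
    Finset.univ.biUnion (Fin.cons s f) = s ∪ Finset.univ.biUnion f := by
  ext a
  simp [Finset.mem_biUnion, Fin.exists_fin_succ]

/-- Main induction: allocate `S` among `k'+1` groups of prescribed sizes drawn from agents `A`,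
given the value invariant. -/
lemma main_lemma {ι : Type*} [DecidableEq ι] (u : ι → Finset γ → ℝ)
    (hadd : ∀ j, AdditiveVal (u j)) (hnn : ∀ j S, 0 ≤ u j S)
    (t M : ι → ℝ) (hM : ∀ j g, u j {g} ≤ M j) (htM : ∀ j, 0 ≤ t j + M j) :
    ∀ (k' : ℕ) (sz : Fin (k'+1) → ℕ) (A : Finset ι) (S : Finset γ),
      (∑ i, sz i) = A.card →
      (∀ j ∈ A, ((k' : ℝ)+1) * t j + (k' : ℝ) * M j ≤ u j S) →
      ∃ (P : Fin (k'+1) → Finset ι) (B : Fin (k'+1) → Finset γ),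
        (∀ i, (P i).card = sz i) ∧
        (∀ i i', i ≠ i' → Disjoint (P i) (P i')) ∧
        (∀ i i', i ≠ i' → Disjoint (B i) (B i')) ∧
        Finset.univ.biUnion P = A ∧
        Finset.univ.biUnion B = S ∧
        (∀ i, ∀ j ∈ P i, t j ≤ u j (B i)) := by
  classical
  intro k'
  induction k' with
  | zero =>
    intro sz A S hsz hinv
    refine ⟨fun _ => A, fun _ => S, ?_, ?_, ?_, ?_, ?_, ?_⟩
    · intro i
      have hi : i = 0 := Fin.eq_zero i
      subst hi
      simpa using hsz.symm
    · intro i i' h; exact absurd ((Fin.eq_zero i).trans (Fin.eq_zero i').symm) h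
    · intro i i' h; exact absurd ((Fin.eq_zero i).trans (Fin.eq_zero i').symm) h
    · simp
    · simp
    · intro i j hj
      have := hinv j hj
      norm_num at this
      exact this
  | succ k IH =>
    intro sz A S hsz hinv
    have hm : sz 0 ≤ A.card := by
      rw [← hsz, Fin.sum_univ_succ]
      omega
    have hsat : ∀ j ∈ A, t j ≤ u j S := by
      intro j hj
      have h1 := hinv j hj
      have h2 := htM j
      push_cast at h1
      nlinarith [h2, (by positivity : (0:ℝ) ≤ (k:ℝ) + 1)]
    obtain ⟨B0, A', hB0S, hA'A, hA'card, hsatA', hrest⟩ :=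
      bag_lemma u hadd hnn t M hM htM A S (sz 0) hm hsat
    have hsz' : (∑ i : Fin (k+1), sz i.succ) = (A \ A').card := by
      rw [Finset.card_sdiff_of_subset hA'A, hA'card]
      rw [Fin.sum_univ_succ] at hsz
      omega
    have hinv' : ∀ j ∈ A \ A', ((k : ℝ)+1) * t j + (k : ℝ) * M j ≤ u j (S \ B0) := by
      intro j hj
      rw [Finset.mem_sdiff] at hj
      have h1 := hinv j hj.1
      have h2 := hrest j hj.1 hj.2
      rw [addval_sdiff (u j) (hadd j) hB0S]
      push_cast at h1
      linarith
    obtain ⟨P', B', hPcard, hPdisj, hBdisj, hPcov, hBcov, hPBsat⟩ :=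
      IH (fun i => sz i.succ) (A \ A') (S \ B0) hsz' hinv'
    have hPsub : ∀ i, P' i ⊆ A \ A' := by
      intro i
      rw [← hPcov]
      exact Finset.subset_biUnion_of_mem P' (Finset.mem_univ i)
    have hBsub : ∀ i, B' i ⊆ S \ B0 := by
      intro i
      rw [← hBcov]
      exact Finset.subset_biUnion_of_mem B' (Finset.mem_univ i)
    refine ⟨Fin.cons A' P', Fin.cons B0 B', ?_, ?_, ?_, ?_, ?_, ?_⟩
    · intro i
      cases i using Fin.cases with
      | zero => simpa using hA'card
      | succ i => simpa using hPcard i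
    · intro i i' hne
      cases i using Fin.cases with
      | zero =>
        cases i' using Fin.cases with
        | zero => exact absurd rfl hne
        | succ i' =>
          simp only [Fin.cons_zero, Fin.cons_succ]
          exact Finset.disjoint_of_subset_right (hPsub i') Finset.disjoint_sdiff
      | succ i0 =>
        cases i' using Fin.cases with
        | zero =>
          simp only [Fin.cons_zero, Fin.cons_succ]
          exact Finset.disjoint_of_subset_left (hPsub i0) Finset.disjoint_sdiff.symm
        | succ i1 =>
          simp only [Fin.cons_succ]
          exact hPdisj i0 i1 (fun h => hne (by rw [h]))
    · intro i i' hne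
      cases i using Fin.cases with
      | zero =>
        cases i' using Fin.cases with
        | zero => exact absurd rfl hne
        | succ i' =>
          simp only [Fin.cons_zero, Fin.cons_succ]
          exact Finset.disjoint_of_subset_right (hBsub i') Finset.disjoint_sdiff
      | succ i0 =>
        cases i' using Fin.cases with
        | zero =>
          simp only [Fin.cons_zero, Fin.cons_succ]
          exact Finset.disjoint_of_subset_left (hBsub i0) Finset.disjoint_sdiff.symm
        | succ i1 =>
          simp only [Fin.cons_succ]
          exact hBdisj i0 i1 (fun h => hne (by rw [h]))
    · rw [biUnion_cons, hPcov]
      exact Finset.union_sdiff_of_subset hA'A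
    · rw [biUnion_cons, hBcov]
      exact Finset.union_sdiff_of_subset hB0S
    · intro i j hj
      cases i using Fin.cases with
      | zero =>
        rw [Fin.cons_zero] at hj ⊢
        exact hsatA' j hj
      | succ i =>
        rw [Fin.cons_succ] at hj ⊢
        exact hPBsat i j hj

end Aux

/-- Variable groups, k groups: for n agents with additive valuations and any group sizes
summing to n, there is a partition of the agents into k groups of the prescribed sizes and
an allocation of the goods such that every agent a_j in group i gets utility at least
(1/k)·u_j(G) − ((k−1)/k)·max_{g∈G} u_j({g}). -/
theorem variable_k_groups_proportional (n k : ℕ) (hn : 0 < n) (hk : 0 < k)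
    (γ : Type*) [Fintype γ] [DecidableEq γ]
    (u : Fin n → Finset γ → ℝ)
    (hadd : ∀ j, AdditiveVal (u j)) (hnonneg : ∀ j S, 0 ≤ u j S)
    (nsize : Fin k → ℕ) (hsum : ∑ i, nsize i = n) :
    ∃ (grp : Fin n → Fin k) (B : Fin k → Finset γ),
      (∀ i, (Finset.univ.filter fun j => grp j = i).card = nsize i) ∧
      (∀ i i', i ≠ i' → Disjoint (B i) (B i')) ∧
      Finset.univ.biUnion B = Finset.univ ∧
      ∀ j : Fin n,
        (1 / (k : ℝ)) * u j Finset.univ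
          - (((k : ℝ) - 1) / (k : ℝ)) * sSup (Set.range fun g : γ => u j {g})
          ≤ u j (B (grp j)) := by
  classical
  obtain ⟨k', rfl⟩ : ∃ k', k = k' + 1 := ⟨k - 1, (Nat.succ_pred_eq_of_pos hk).symm⟩
  set M : Fin n → ℝ := fun j => sSup (Set.range fun g : γ => u j {g}) with hMdef
  set t : Fin n → ℝ := fun j =>
    (1 / ((k' : ℝ) + 1)) * u j Finset.univ - ((k' : ℝ) / ((k' : ℝ) + 1)) * M j with htdef
  have hkpos : (0:ℝ) < (k' : ℝ) + 1 := by positivity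
  have hM0 : ∀ j, 0 ≤ M j := by
    intro j
    by_cases h : Nonempty γ
    · obtain ⟨g⟩ := h
      exact le_trans (hnonneg j {g}) (le_csSup (Set.finite_range _).bddAbove ⟨g, rfl⟩)
    · have hr : (Set.range fun g : γ => u j {g}) = ∅ := by
        rw [Set.range_eq_empty_iff]
        exact not_nonempty_iff.mp h
      simp only [hMdef, hr, Real.sSup_empty, le_refl]
  have hMg : ∀ j (g : γ), u j {g} ≤ M j := by
    intro j g
    exact le_csSup (Set.finite_range _).bddAbove ⟨g, rfl⟩
  have htM : ∀ j, 0 ≤ t j + M j := by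
    intro j
    have h1 : t j + M j = (u j Finset.univ + M j) / ((k' : ℝ) + 1) := by
      rw [htdef]
      field_simp
      ring
    rw [h1]
    have := hnonneg j Finset.univ
    have := hM0 j
    positivity
  have hsz : (∑ i, nsize i) = (Finset.univ : Finset (Fin n)).card := by
    rw [hsum]; simp
  have hinv : ∀ j ∈ (Finset.univ : Finset (Fin n)),
      ((k' : ℝ)+1) * t j + (k' : ℝ) * M j ≤ u j Finset.univ := by
    intro j _
    apply le_of_eq
    rw [htdef]
    field_simp
    ring
  obtain ⟨P, B, hPcard, hPdisj, hBdisj, hPcov, hBcov, hsatB⟩ :=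
    main_lemma u hadd hnonneg t M hMg htM k' nsize Finset.univ Finset.univ hsz hinv
  have hex : ∀ j : Fin n, ∃ i, j ∈ P i := by
    intro j
    have : j ∈ Finset.univ.biUnion P := by rw [hPcov]; exact Finset.mem_univ j
    rw [Finset.mem_biUnion] at this
    obtain ⟨i, _, hi⟩ := this
    exact ⟨i, hi⟩
  refine ⟨fun j => (hex j).choose, B, ?_, hBdisj, hBcov, ?_⟩
  · intro i
    have hfil : (Finset.univ.filter fun j => (hex j).choose = i) = P i := by
      ext j
      simp only [Finset.mem_filter, Finset.mem_univ, true_and]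
      constructor
      · rintro rfl
        exact (hex j).choose_spec
      · intro hj
        by_contra hne
        exact Finset.disjoint_left.mp (hPdisj _ _ hne) (hex j).choose_spec hj
    rw [hfil]
    exact hPcard i
  · intro j
    have h := hsatB _ j (hex j).choose_spec
    have heq : (1 / (((k' : ℕ) + 1 : ℕ) : ℝ)) * u j Finset.univ
        - (((((k' : ℕ) + 1 : ℕ) : ℝ) - 1) / (((k' : ℕ) + 1 : ℕ) : ℝ))
          * sSup (Set.range fun g : γ => u j {g}) = t j := by
      rw [htdef, hMdef]
      push_cast
      ring
    rw [heq]
    exact h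
end
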